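/- arXiv:1702.04841 — 9 statements merged into one kernel-verified Lean document; each statement's English description precedes it below -/
import Mathlib

section
/- Let n, k be integers with k ≥ 1 and n ≥ 2k + 2. Define λ ∈ ℚ^n by λ_i = n − k − 1 − i for 1 ≤ i ≤ n − k − 1 and λ_{n−k−1+j} = k + 3/2 − j for 1 ≤ j ≤ k + 1 (so λ = (n−k−2, …, 1, 0, k+1/2, …, 3/2, 1/2)), and define λ′ ∈ ℚ^n by λ′_i = n − k − 1/2 − i for 1 ≤ i ≤ n − k − 1 and λ′_{n−k−1+j} = k + 2 − j for 1 ≤ j ≤ k + 1 (so λ′ = (n−k−3/2, …, 3/2, 1/2, k+1, …, 2, 1)). Then in the group algebra ℤ[ℚ^n] the identity (∑_{w ∈ W(D_n)} sgn(w) · e^{w·λ}) · ∏_{i=1}^n (e^{δ_i/2} − e^{−δ_i/2}) = ∑_{w ∈ W(B_n)} sgn(w) · e^{w·λ′} holds. -/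
/-- The weight `λ = (n−k−2, …, 1, 0, k+1/2, …, 3/2, 1/2) ∈ ℚⁿ` (0-indexed). -/
def lamD (n k : ℕ) : Fin n → ℚ := fun i =>
  if (i : ℕ) < n - k - 1 then (n : ℚ) - k - 2 - (i : ℕ)
  else (k : ℚ) + 1 / 2 - (((i : ℕ) - (n - k - 1) : ℕ) : ℚ)

/-- The weight `λ′ = (n−k−3/2, …, 3/2, 1/2, k+1, …, 2, 1) ∈ ℚⁿ` (0-indexed). -/
def lamB (n k : ℕ) : Fin n → ℚ := fun i =>
  if (i : ℕ) < n - k - 1 then (n : ℚ) - k - 3 / 2 - (i : ℕ)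
  else (k : ℚ) + 1 - (((i : ℕ) - (n - k - 1) : ℕ) : ℚ)

open Finset Matrix

variable {n : ℕ}

abbrev Rng (n : ℕ) := AddMonoidAlgebra ℤ (Fin n → ℚ)

noncomputable def sgl (u : Fin n → ℚ) : Rng n := AddMonoidAlgebra.single u 1

noncomputable def es (i : Fin n) (x : ℚ) : Rng n := sgl (fun j => if j = i then x else 0)

lemma sgl_mul (u v : Fin n → ℚ) : sgl u * sgl v = sgl (u + v) := by
  simp [sgl, AddMonoidAlgebra.single_mul_single]

lemma sgl_zero : (sgl 0 : Rng n) = 1 := rfl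

lemma es_mul (i : Fin n) (x y : ℚ) : es i x * es i y = es i (x + y) := by
  rw [es, es, es, sgl_mul]
  congr 1
  funext j
  by_cases h : j = i <;> simp [h]

lemma es_zero (i : Fin n) : es i 0 = 1 := by
  rw [es, ← sgl_zero]
  congr 1
  funext j; by_cases h : j = i <;> simp [h]

lemma prod_es (u : Fin n → ℚ) : (∏ i, es i (u i)) = sgl u := by
  classical
  have : ∀ (s : Finset (Fin n)), (∏ i ∈ s, es i (u i)) =
      sgl (fun j => if j ∈ s then u j else 0) := by
    intro s
    induction s using Finset.induction_on with
    | empty => rw [Finset.prod_empty, ← sgl_zero]; congr 1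
    | @insert a s ha ih =>
        rw [Finset.prod_insert ha, ih, es, sgl_mul]
        congr 1
        funext j
        by_cases h : j = a
        · subst h; simp [ha]
        · simp [Pi.add_apply, h]
  rw [this Finset.univ]
  simp

lemma sum_units {M : Type*} [AddCommMonoid M] (g : ℤˣ → M) :
    ∑ u : ℤˣ, g u = g 1 + g (-1) := by
  rw [show (Finset.univ : Finset ℤˣ) = {1, -1} by decide]
  rw [Finset.sum_insert (by decide), Finset.sum_singleton]

lemma prod_zsmul {ι : Type*} (s : Finset ι) (z : ι → ℤ) (x : ι → Rng n) :
    ∏ i ∈ s, z i • x i = (∏ i ∈ s, z i) • ∏ i ∈ s, x i := by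
  classical
  induction s using Finset.induction_on with
  | empty => simp
  | @insert a s ha ih =>
      rw [Finset.prod_insert ha, Finset.prod_insert ha, Finset.prod_insert ha, ih,
        smul_mul_smul_comm]

lemma keyExpand (w : ℤˣ →* ℤ) (v : Fin n → ℚ) :
    Matrix.det (Matrix.of fun i j : Fin n => es i (v j) + w (-1) • es i (-(v j)))
    = ∑ σ : Equiv.Perm (Fin n), ∑ ε : Fin n → ℤˣ,
      ((Equiv.Perm.sign σ : ℤ) * w (∏ i, ε i)) •
        sgl (fun i => ((ε i : ℤ) : ℚ) * v (σ⁻¹ i)) := by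
  rw [Matrix.det_apply]
  refine Finset.sum_congr rfl fun σ _ => ?_
  have factor : ∀ i : Fin n, ((Matrix.of fun i j : Fin n =>
        es i (v j) + w (-1) • es i (-(v j))) (σ i) i)
      = ∑ u : ℤˣ, w u • es (σ i) ((u : ℤ) * v i) := by
    intro i
    rw [sum_units]
    simp
  rw [Finset.prod_congr rfl fun i _ => factor i, Finset.prod_univ_sum,
    Fintype.piFinset_univ, Finset.smul_sum]
  refine Fintype.sum_equiv (Equiv.arrowCongr σ (Equiv.refl ℤˣ)) _ _ fun ε => ?_
  have hprod : ∏ i, es (σ i) (((ε i : ℤ) : ℚ) * v i)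
      = sgl (fun j => ((ε (σ⁻¹ j) : ℤ) : ℚ) * v (σ⁻¹ j)) := by
    rw [← prod_es (fun j => ((ε (σ⁻¹ j) : ℤ) : ℚ) * v (σ⁻¹ j)),
      ← Equiv.prod_comp σ (fun j => es j (((ε (σ⁻¹ j) : ℤ) : ℚ) * v (σ⁻¹ j)))]
    simp
  rw [prod_zsmul, hprod, ← map_prod, Units.smul_def, smul_smul]
  simp [Equiv.arrowCongr, Equiv.prod_comp σ.symm ε, Equiv.Perm.inv_def]

/-- expansion with `w = coe`: the type-B alternating sum as a determinant -/
lemma expandB (v : Fin n → ℚ) :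
    Matrix.det (Matrix.of fun i j : Fin n => es i (v j) - es i (-(v j)))
    = ∑ σ : Equiv.Perm (Fin n), ∑ ε : Fin n → ℤˣ,
      (((Equiv.Perm.sign σ * ∏ i, ε i : ℤˣ) : ℤ)) •
        sgl (fun i => ((ε i : ℤ) : ℚ) * v (σ⁻¹ i)) := by
  have h := keyExpand (n := n) (Units.coeHom ℤ) v
  simp only [Units.coeHom_apply, Units.val_neg, Units.val_one, neg_smul, one_smul,
    ← sub_eq_add_neg] at h
  rw [h]
  refine Finset.sum_congr rfl fun σ _ => Finset.sum_congr rfl fun ε _ => ?_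
  rw [Units.val_mul]

/-- expansion with `w = 1`: the "cosh" determinant -/
lemma expandC (v : Fin n → ℚ) :
    Matrix.det (Matrix.of fun i j : Fin n => es i (v j) + es i (-(v j)))
    = ∑ σ : Equiv.Perm (Fin n), ∑ ε : Fin n → ℤˣ,
      ((Equiv.Perm.sign σ : ℤ)) • sgl (fun i => ((ε i : ℤ) : ℚ) * v (σ⁻¹ i)) := by
  have h := keyExpand (n := n) 1 v
  simpa using h

lemma two_smul_cancel (x y : Rng n) (h : (2 : ℤ) • x = (2 : ℤ) • y) : x = y := by
  ext a
  have h2 : ((2 : ℤ) • x).coeff a = ((2 : ℤ) • y).coeff a := by rw [h]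
  rw [AddMonoidAlgebra.coeff_smul_apply, AddMonoidAlgebra.coeff_smul_apply, smul_eq_mul, smul_eq_mul] at h2
  omega

lemma key_mul (i : Fin n) (x : ℚ) :
    (es i (1/2) - es i (-(1/2))) * (es i x + es i (-x))
    = (es i (x + 1/2) - es i (-(x + 1/2)))
      - (es i (x - 1/2) - es i (-(x - 1/2))) := by
  rw [sub_mul, mul_add, mul_add, es_mul, es_mul, es_mul, es_mul,
    show (1/2 : ℚ) + x = x + 1/2 by ring,
    show (1/2 : ℚ) + -x = -(x - 1/2) by ring,
    show (-(1/2) : ℚ) + x = x - 1/2 by ring,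
    show (-(1/2) : ℚ) + -x = -(x + 1/2) by ring]
  abel

variable {k : ℕ}

lemma cast_sub_q {a b : ℕ} (h : b ≤ a) : ((a - b : ℕ) : ℚ) = (a : ℚ) - b := by
  exact Nat.cast_sub h

lemma lamB_eq (j : Fin n) : lamB n k j = lamD n k j + 1/2 := by
  unfold lamB lamD
  by_cases h : (j : ℕ) < n - k - 1 <;> simp only [h, if_true, if_false] <;> ring

lemma lamD_at_p0 (hk : 1 ≤ k) (hn : 2*k+2 ≤ n) (j : Fin n) (hj : (j:ℕ) = n-k-2) :
    lamD n k j = 0 := by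
  unfold lamD
  rw [if_pos (by omega), hj, Nat.sub_sub, cast_sub_q (by omega)]
  push_cast
  ring

lemma lamB_at_p0 (hk : 1 ≤ k) (hn : 2*k+2 ≤ n) (j : Fin n) (hj : (j:ℕ) = n-k-2) :
    lamB n k j = 1/2 := by
  rw [lamB_eq, lamD_at_p0 hk hn j hj]
  ring

lemma lamD_last (hk : 1 ≤ k) (hn : 2*k+2 ≤ n) (j : Fin n) (hj : (j:ℕ)+1 = n) :
    lamD n k j = 1/2 := by
  unfold lamD
  rw [if_neg (by omega), show (j:ℕ) - (n-k-1) = k by omega]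
  ring

lemma lamB_last (hk : 1 ≤ k) (hn : 2*k+2 ≤ n) (j : Fin n) (hj : (j:ℕ)+1 = n) :
    lamB n k j = 1 := by
  rw [lamB_eq, lamD_last hk hn j hj]
  ring

lemma lamB_succ (hk : 1 ≤ k) (hn : 2*k+2 ≤ n) (j : Fin n) (hj1 : (j:ℕ) ≠ n-k-2)
    (hj2 : (j:ℕ)+1 < n) :
    lamB n k ⟨(j:ℕ)+1, hj2⟩ = lamD n k j - 1/2 := by
  unfold lamB lamD
  by_cases h : (j : ℕ) < n - k - 1
  · rw [if_pos h]
    rw [if_pos (show ((⟨(j:ℕ)+1, hj2⟩ : Fin n) : ℕ) < n - k - 1 by simp; omega)]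
    push_cast
    ring
  · rw [if_neg h]
    rw [if_neg (show ¬ ((⟨(j:ℕ)+1, hj2⟩ : Fin n) : ℕ) < n - k - 1 by simp; omega)]
    simp only [Fin.val_mk]
    rw [show (j:ℕ) + 1 - (n-k-1) = ((j:ℕ) - (n-k-1)) + 1 by omega]
    push_cast
    ring

noncomputable def matB (n k : ℕ) : Matrix (Fin n) (Fin n) (Rng n) :=
  Matrix.of fun i j => es i (lamB n k j) - es i (-(lamB n k j))

noncomputable def matC (n k : ℕ) : Matrix (Fin n) (Fin n) (Rng n) :=
  Matrix.of fun i j => es i (lamD n k j) + es i (-(lamD n k j))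

noncomputable def matS (n k : ℕ) : Matrix (Fin n) (Fin n) (Rng n) :=
  Matrix.of fun i j => es i (lamD n k j) - es i (-(lamD n k j))

noncomputable def matC' (n k : ℕ) : Matrix (Fin n) (Fin n) (Rng n) :=
  Matrix.of fun i j => if (j:ℕ) = n-k-2 then 1
    else es i (lamD n k j) + es i (-(lamD n k j))

noncomputable def matU (n k : ℕ) : Matrix (Fin n) (Fin n) (Rng n) :=
  Matrix.of fun l j => (if l = j then 1 else 0)
    - (if (j:ℕ) ≠ n-k-2 ∧ (l:ℕ) = (j:ℕ)+1 then 1 else 0)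

lemma detS_zero (hk : 1 ≤ k) (hn : 2*k+2 ≤ n) : (matS n k).det = 0 := by
  apply Matrix.det_eq_zero_of_column_eq_zero (⟨n-k-2, by omega⟩ : Fin n)
  intro i
  have h0 : lamD n k (⟨n-k-2, by omega⟩ : Fin n) = 0 := lamD_at_p0 hk hn _ rfl
  simp [matS, h0, es_zero]

lemma detU_one (hk : 1 ≤ k) (hn : 2*k+2 ≤ n) : (matU n k).det = 1 := by
  have ht : (matU n k).BlockTriangular OrderDual.toDual := by
    intro i j h
    have hij : i < j := h
    have hij' : (i:ℕ) < (j:ℕ) := hij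
    simp only [matU, Matrix.of_apply]
    rw [if_neg (by exact fun he => absurd he (ne_of_lt hij)),
      if_neg (by rintro ⟨-, h2⟩; omega), sub_zero]
  rw [Matrix.det_of_lowerTriangular _ ht]
  apply Finset.prod_eq_one
  intro j _
  show matU n k j j = 1
  simp only [matU, Matrix.of_apply, if_true, eq_self_iff_true]
  rw [if_neg (by rintro ⟨-, h2⟩; omega), sub_zero]

lemma detC_eq (hk : 1 ≤ k) (hn : 2*k+2 ≤ n) :
    (matC n k).det = 2 * (matC' n k).det := by
  have hlt : n - k - 2 < n := by omega
  set p0 : Fin n := ⟨n-k-2, hlt⟩ with hp0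
  have h1 : matC n k = (matC' n k).updateCol p0 ((2 : Rng n) • (fun _ => (1 : Rng n))) := by
    refine Matrix.ext fun i j => ?_
    rw [Matrix.updateCol_apply]
    by_cases hj : j = p0
    · rw [if_pos hj]
      have h0 : lamD n k j = 0 := lamD_at_p0 hk hn j (by rw [hj])
      simp only [matC, Matrix.of_apply, h0, neg_zero, es_zero, Pi.smul_apply,
        smul_eq_mul, mul_one]
      exact one_add_one_eq_two
    · rw [if_neg hj]
      have : ¬ ((j:ℕ) = n-k-2) := by
        intro hc; exact hj (Fin.ext hc)
      simp [matC, matC', this]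
  have h2 : (matC' n k).updateCol p0 (fun _ => (1:Rng n)) = matC' n k := by
    refine Matrix.ext fun i j => ?_
    rw [Matrix.updateCol_apply]
    by_cases hj : j = p0
    · rw [if_pos hj]
      have : ((j:ℕ) = n-k-2) := by rw [hj]
      simp [matC', this]
    · rw [if_neg hj]
  rw [h1, Matrix.det_updateCol_smul, h2]

lemma matBU (hk : 1 ≤ k) (hn : 2*k+2 ≤ n) :
    Matrix.of (fun i j => (es i (1/2) - es i (-(1/2))) * matC' n k i j)
      = matB n k * matU n k := by
  refine Matrix.ext fun i j => ?_
  rw [Matrix.mul_apply]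
  have hsplit : ∑ l, matB n k i l * matU n k l j
      = (∑ l, if l = j then matB n k i l else 0)
        - ∑ l, (if (j:ℕ) ≠ n-k-2 ∧ l.val = (j:ℕ)+1 then matB n k i l else 0) := by
    rw [← Finset.sum_sub_distrib]
    refine Finset.sum_congr rfl fun l _ => ?_
    simp only [matU, Matrix.of_apply, mul_sub, mul_ite, mul_one, mul_zero]
  rw [hsplit, Finset.sum_ite_eq' Finset.univ j (fun l => matB n k i l), if_pos (Finset.mem_univ j)]
  by_cases hj1 : (j:ℕ) = n-k-2
  · -- column p0 : no shift
    rw [Finset.sum_eq_zero (fun l _ => by rw [if_neg (by tauto)]), sub_zero]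
    simp only [Matrix.of_apply, matC', if_pos hj1, mul_one]
    rw [matB]
    simp only [Matrix.of_apply]
    rw [lamB_at_p0 hk hn j hj1]
  · by_cases hj2 : (j:ℕ)+1 < n
    · -- generic column
      have hsum : ∑ l, (if (j:ℕ) ≠ n-k-2 ∧ l.val = (j:ℕ)+1 then matB n k i l else 0)
          = matB n k i ⟨(j:ℕ)+1, hj2⟩ := by
        rw [Finset.sum_eq_single (⟨(j:ℕ)+1, hj2⟩ : Fin n)]
        · rw [if_pos ⟨hj1, rfl⟩]
        · intro l _ hl
          rw [if_neg]
          rintro ⟨-, h2⟩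
          exact hl (Fin.ext h2)
        · intro h; exact absurd (Finset.mem_univ _) h
      rw [hsum]
      simp only [Matrix.of_apply, matC', if_neg hj1, matB]
      rw [key_mul i (lamD n k j), lamB_succ hk hn j hj1 hj2, ← lamB_eq]
    · -- last column
      have hjn : (j:ℕ)+1 = n := by omega
      rw [Finset.sum_eq_zero (fun l _ => by
        rw [if_neg]; rintro ⟨-, h2⟩; have := l.isLt; omega), sub_zero]
      simp only [Matrix.of_apply, matC', if_neg hj1, matB]
      rw [key_mul i (lamD n k j), lamD_last hk hn j hjn, lamB_last hk hn j hjn]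
      norm_num [es_zero]

lemma detB_eq (hk : 1 ≤ k) (hn : 2*k+2 ≤ n) :
    (∏ i, (es i (1/2) - es i (-(1/2)))) * (matC' n k).det = (matB n k).det := by
  rw [← Matrix.det_mul_column (fun i => es i (1/2) - es i (-(1/2))) (matC' n k),
    matBU hk hn, Matrix.det_mul, detU_one hk hn, mul_one]

lemma two_ite (s εp : ℤˣ) (X : Rng n) :
    (2:ℤ) • (if εp = 1 then ((s * εp : ℤˣ):ℤ) • X else 0)
    = ((s:ℤ)) • X + ((s*εp : ℤˣ):ℤ) • X := by
  rcases Int.units_eq_one_or εp with h | h <;> subst h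
  · rw [if_pos rfl, mul_one, two_smul]
  · rw [if_neg (by decide), smul_zero]
    simp

/-- In `ℤ[ℚⁿ]`, the `W(Dₙ)`-alternating sum over the orbit of `λ`, multiplied by
`∏ᵢ (e^{δᵢ/2} − e^{−δᵢ/2})`, equals the `W(Bₙ)`-alternating sum over the orbit of `λ′`.
Signed permutations are encoded as pairs `(σ, ε)` with `σ ∈ Sₙ`, `ε ∈ {±1}ⁿ`, acting by
`(w·v)ᵢ = εᵢ · v_{σ⁻¹ i}`, with sign `sgn σ · ∏ εᵢ`; `W(Dₙ)` is the subgroup with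
`∏ εᵢ = 1`. -/
theorem weyl_denominator_D_to_B (n k : ℕ) (hk : 1 ≤ k) (hn : 2 * k + 2 ≤ n) :
    (∑ σ : Equiv.Perm (Fin n), ∑ ε : Fin n → ℤˣ,
        if (∏ i, ε i) = 1 then
          (((Equiv.Perm.sign σ * ∏ i, ε i : ℤˣ) : ℤ)) •
            (AddMonoidAlgebra.single
              (fun i => ((ε i : ℤ) : ℚ) * lamD n k (σ⁻¹ i)) (1 : ℤ) :
              AddMonoidAlgebra ℤ (Fin n → ℚ))
        else 0) *
      ∏ i : Fin n,
        (AddMonoidAlgebra.single (fun j => if j = i then (1 / 2 : ℚ) else 0) (1 : ℤ) -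
          AddMonoidAlgebra.single (fun j => if j = i then (-(1 / 2) : ℚ) else 0) (1 : ℤ)) =
    ∑ σ : Equiv.Perm (Fin n), ∑ ε : Fin n → ℤˣ,
      (((Equiv.Perm.sign σ * ∏ i, ε i : ℤˣ) : ℤ)) •
        (AddMonoidAlgebra.single
          (fun i => ((ε i : ℤ) : ℚ) * lamB n k (σ⁻¹ i)) (1 : ℤ) :
          AddMonoidAlgebra ℤ (Fin n → ℚ)) := by
  have hC := expandC (n := n) (lamD n k)
  have hS := expandB (n := n) (lamD n k)
  have hB := expandB (n := n) (lamB n k)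
  apply two_smul_cancel
  have hP : (∏ i : Fin n,
        (AddMonoidAlgebra.single (fun j => if j = i then (1 / 2 : ℚ) else 0) (1 : ℤ) -
          AddMonoidAlgebra.single (fun j => if j = i then (-(1 / 2) : ℚ) else 0) (1 : ℤ))
        : Rng n)
      = ∏ i, (es i (1/2) - es i (-(1/2))) := rfl
  have hD2 : (2:ℤ) • (∑ σ : Equiv.Perm (Fin n), ∑ ε : Fin n → ℤˣ,
      if (∏ i, ε i) = 1 then
        (((Equiv.Perm.sign σ * ∏ i, ε i : ℤˣ) : ℤ)) •
          (AddMonoidAlgebra.single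
            (fun i => ((ε i : ℤ) : ℚ) * lamD n k (σ⁻¹ i)) (1 : ℤ) : Rng n)
      else 0)
      = (matC n k).det + (matS n k).det := by
    unfold matC matS
    rw [hC, hS, Finset.smul_sum, ← Finset.sum_add_distrib]
    refine Finset.sum_congr rfl fun σ _ => ?_
    rw [Finset.smul_sum, ← Finset.sum_add_distrib]
    refine Finset.sum_congr rfl fun ε _ => ?_
    exact two_ite (Equiv.Perm.sign σ) (∏ i, ε i) _
  rw [← smul_mul_assoc, hD2, detS_zero hk hn, add_zero, detC_eq hk hn, hP,
    mul_assoc, mul_comm ((matC' n k).det), detB_eq hk hn]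
  have h2 : ((2:ℤ) : Rng n) = 2 := by norm_num
  rw [zsmul_eq_mul, h2]
  congr 1
end

section
/- Let (e_1, …, e_n; f_1, …, f_n) be a hyperbolic basis of the 2n-dimensional complex quadratic space (V, Q), and set ℰ = i^n · ∏_{j=1}^n (1 − ι(e_j)ι(f_j)) in the Clifford algebra C(V,Q) (the factors pairwise commute, so the product is order-independent). Then ℰ anticommutes with every vector: ℰ · ι(v) = −ι(v) · ℰ for all v ∈ V. -/
open CliffordAlgebra

/-- A hyperbolic family `(e₁, …, e_m; f₁, …, f_m)` in the quadratic space `(V, Q)`: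
isotropic vectors with `polar Q (e i) (f j) = 2·δ_{ij}` and all other polar pairings zero. -/
def IsHyperbolicFamily {V : Type*} [AddCommGroup V] [Module ℂ V]
    (Q : QuadraticForm ℂ V) {m : ℕ} (e f : Fin m → V) : Prop :=
  (∀ j, Q (e j) = 0) ∧ (∀ j, Q (f j) = 0) ∧
    (∀ i j, QuadraticMap.polar (⇑Q) (e i) (f j) = if i = j then 2 else 0) ∧
    (∀ i j, QuadraticMap.polar (⇑Q) (e i) (e j) = 0) ∧
    (∀ i j, QuadraticMap.polar (⇑Q) (f i) (f j) = 0)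

/-- A hyperbolic basis: a hyperbolic family which is a basis of `V`. -/
def IsHyperbolicBasis {V : Type*} [AddCommGroup V] [Module ℂ V]
    (Q : QuadraticForm ℂ V) {m : ℕ} (e f : Fin m → V) : Prop :=
  IsHyperbolicFamily Q e f ∧ ∃ b : Module.Basis (Fin m ⊕ Fin m) ℂ V, ⇑b = Sum.elim e f

/-- The element `ℰ = iⁿ · ∏ⱼ (1 − ι(eⱼ)ι(fⱼ))` of the Clifford algebra. -/
noncomputable def cliffordCenterE {V : Type*} [AddCommGroup V] [Module ℂ V]
    (Q : QuadraticForm ℂ V) {n : ℕ} (e f : Fin n → V) : CliffordAlgebra Q :=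
  Complex.I ^ n • (List.ofFn fun j => (1 : CliffordAlgebra Q) - ι Q (e j) * ι Q (f j)).prod

lemma list_prod_anticomm {A : Type*} [Ring A] : ∀ {n : ℕ} (g : Fin n → A) (x : A) (k : Fin n),
    (∀ j, j ≠ k → Commute (g j) x) → g k * x = -(x * g k) →
    (List.ofFn g).prod * x = -(x * (List.ofFn g).prod) := by
  intro n
  induction n with
  | zero => intro g x k; exact k.elim0
  | succ n ih =>
    intro g x k hc ha
    rw [List.ofFn_succ, List.prod_cons]
    set P := (List.ofFn fun i => g i.succ).prod with hP
    rcases Fin.eq_zero_or_eq_succ k with rfl | ⟨j, rfl⟩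
    · have hPx : Commute x P := by
        apply Commute.list_prod_right
        intro y hy
        rw [List.mem_ofFn] at hy
        obtain ⟨i, rfl⟩ := hy
        exact (hc i.succ (Fin.succ_ne_zero i)).symm
      calc g 0 * P * x = g 0 * (x * P) := by rw [mul_assoc, ← hPx.eq]
        _ = (g 0 * x) * P := by rw [mul_assoc]
        _ = -(x * (g 0 * P)) := by rw [ha, neg_mul, mul_assoc]
    · have h0 : Commute (g 0) x := hc 0 (by simp [(Fin.succ_ne_zero j).symm])
      have hih : P * x = -(x * P) := by
        apply ih (fun i => g i.succ) x j
        · intro i hi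
          exact hc i.succ (by simpa [Fin.succ_injective] using fun H => hi (Fin.succ_injective _ H))
        · exact ha
      calc g 0 * P * x = g 0 * (P * x) := by rw [mul_assoc]
        _ = g 0 * -(x * P) := by rw [hih]
        _ = -(g 0 * x * P) := by rw [mul_neg, mul_assoc]
        _ = -(x * (g 0 * P)) := by rw [h0.eq, mul_assoc]

/-- `ℰ` anticommutes with every vector of `V`. -/
theorem cliffordCenterE_anticommutes_vectors {V : Type*} [AddCommGroup V] [Module ℂ V]
    (Q : QuadraticForm ℂ V) {n : ℕ} (e f : Fin n → V)
    (h : IsHyperbolicBasis Q e f) (v : V) :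
    cliffordCenterE Q e f * ι Q v = -(ι Q v * cliffordCenterE Q e f) := by
  obtain ⟨⟨he, hf, hef, hee, hff⟩, b, hb⟩ := h
  -- anticommutation from vanishing polar form
  have hswap : ∀ x y : V, QuadraticMap.polar (⇑Q) x y = 0 →
      ι Q x * ι Q y = -(ι Q y * ι Q x) := by
    intro x y hxy
    have h1 := ι_mul_ι_add_swap (Q := Q) x y
    rw [hxy, map_zero] at h1
    exact eq_neg_of_add_eq_zero_left h1
  have hsq : ∀ x : V, Q x = 0 → ι Q x * ι Q x = 0 := by
    intro x hx
    rw [ι_sq_scalar, hx, map_zero]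
  have hefk : ∀ k, ι Q (f k) * ι Q (e k) = 2 - ι Q (e k) * ι Q (f k) := by
    intro k
    have h1 := ι_mul_ι_add_swap (Q := Q) (f k) (e k)
    rw [QuadraticMap.polar_comm, hef k k, if_pos rfl, map_ofNat] at h1
    exact eq_sub_of_add_eq h1
  set g : Fin n → CliffordAlgebra Q :=
    fun j => (1 : CliffordAlgebra Q) - ι Q (e j) * ι Q (f j) with hg
  set P := (List.ofFn g).prod with hPdef
  -- commutation of factors g j with ι(e k), ι(f k) for j ≠ k
  have hcomm : ∀ (j k : Fin n) (x : V), j ≠ k →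
      QuadraticMap.polar (⇑Q) (e j) x = 0 → QuadraticMap.polar (⇑Q) (f j) x = 0 →
      Commute (g j) (ι Q x) := by
    intro j k x _ hex hfx
    have h1 : ι Q (e j) * ι Q x = -(ι Q x * ι Q (e j)) := hswap _ _ hex
    have h2 : ι Q (f j) * ι Q x = -(ι Q x * ι Q (f j)) := hswap _ _ hfx
    have : ι Q (e j) * ι Q (f j) * ι Q x = ι Q x * (ι Q (e j) * ι Q (f j)) := by
      calc ι Q (e j) * ι Q (f j) * ι Q x = ι Q (e j) * (ι Q (f j) * ι Q x) := by rw [mul_assoc]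
        _ = -(ι Q (e j) * ι Q x * ι Q (f j)) := by rw [h2]; noncomm_ring
        _ = ι Q x * ι Q (e j) * ι Q (f j) := by rw [h1]; noncomm_ring
        _ = ι Q x * (ι Q (e j) * ι Q (f j)) := by rw [mul_assoc]
    simp only [hg, Commute, SemiconjBy, sub_mul, mul_sub, one_mul, mul_one, this]
  -- anticommutation of g k with ι(e k) and ι(f k)
  have hak : ∀ k, g k * ι Q (e k) = -(ι Q (e k) * g k) := by
    intro k
    have h2 : ι Q (e k) * ι Q (f k) * ι Q (e k) = 2 * ι Q (e k) := by
      rw [mul_assoc, hefk k, mul_sub, ← mul_assoc, hsq _ (he k)]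
      noncomm_ring
    simp only [hg, sub_mul, mul_sub, one_mul, mul_one, h2, ← mul_assoc, hsq _ (he k)]
    noncomm_ring
  have hbk : ∀ k, g k * ι Q (f k) = -(ι Q (f k) * g k) := by
    intro k
    have h2 : ι Q (f k) * (ι Q (e k) * ι Q (f k)) = 2 * ι Q (f k) := by
      rw [← mul_assoc, hefk k, sub_mul, mul_assoc, hsq _ (hf k)]
      noncomm_ring
    simp only [hg, sub_mul, mul_sub, one_mul, mul_one, h2, mul_assoc, hsq _ (hf k)]
    noncomm_ring
  -- the key statement for the unscaled product
  have key : P * ι Q v = -(ι Q v * P) := by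
    have hbasis : ∀ i : Fin n ⊕ Fin n, P * ι Q (b i) = -(ι Q (b i) * P) := by
      intro i
      rw [hb]
      rcases i with k | k
      · exact list_prod_anticomm g (ι Q (e k)) k
          (fun j hj => hcomm j k (e k) hj (hee j k)
            (by rw [QuadraticMap.polar_comm, hef k j, if_neg (fun H => hj H.symm)]))
          (hak k)
      · exact list_prod_anticomm g (ι Q (f k)) k
          (fun j hj => hcomm j k (f k) hj (by rw [hef j k, if_neg hj]) (hff j k))
          (hbk k)
    let φ : V →ₗ[ℂ] CliffordAlgebra Q :=
      (LinearMap.mulLeft ℂ P).comp (ι Q) + (LinearMap.mulRight ℂ P).comp (ι Q)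
    have hφ : φ = 0 := by
      apply b.ext
      intro i
      simp only [φ, LinearMap.add_apply, LinearMap.comp_apply, LinearMap.mulLeft_apply,
        LinearMap.mulRight_apply, LinearMap.zero_apply]
      rw [hbasis i]
      exact neg_add_cancel _
    have := LinearMap.congr_fun hφ v
    simp only [φ, LinearMap.add_apply, LinearMap.comp_apply, LinearMap.mulLeft_apply,
      LinearMap.mulRight_apply, LinearMap.zero_apply] at this
    exact eq_neg_of_add_eq_zero_left this
  have hE : cliffordCenterE Q e f = Complex.I ^ n • P := rfl
  rw [hE, smul_mul_assoc, mul_smul_comm, key, smul_neg]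
end

section
/- Let (e_1, …, e_n; f_1, …, f_n) be a hyperbolic basis of the 2n-dimensional complex quadratic space (V, Q), and set ℰ = i^n · ∏_{j=1}^n (1 − ι(e_j)ι(f_j)) in C(V,Q). Then ℰ belongs to the spin group spinGroup Q, and for every v ∈ V one has ℰ · ι(v) · ℰ = (−1)^{n+1} · ι(v); in particular, conjugation of ι(V) by the unit ℰ (whose inverse is (−1)^n ℰ) is multiplication by −1, so ℰ and −ℰ are the two elements of the spin group lying over −Id ∈ SO(V). -/
open CliffordAlgebra

section ListAux

variable {A : Type*} [Ring A] [Algebra ℂ A]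

lemma myprod_sq : ∀ (l : List A), (∀ x ∈ l, ∀ y ∈ l, Commute x y) → (∀ x ∈ l, x * x = 1) →
    l.prod * l.prod = 1 := by
  intro l
  induction l with
  | nil => simp
  | cons x l ih =>
    intro hc hs
    have hxl : Commute x l.prod :=
      Commute.list_prod_right _ _ fun y hy => hc x (by simp) y (by simp [hy])
    have h1 : l.prod * l.prod = 1 :=
      ih (fun a ha b hb => hc a (by simp [ha]) b (by simp [hb])) (fun a ha => hs a (by simp [ha]))
    have h2 : x * x = 1 := hs x (by simp)
    calc (x :: l).prod * (x :: l).prod = x * (l.prod * x) * l.prod := by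
          simp [List.prod_cons, mul_assoc]
      _ = x * (x * l.prod) * l.prod := by rw [hxl.eq]
      _ = (x * x) * (l.prod * l.prod) := by simp [mul_assoc]
      _ = 1 := by rw [h1, h2, mul_one]

lemma myprod_smul : ∀ (n : ℕ) (c : ℂ) (g : Fin n → A),
    (List.ofFn fun j => c • g j).prod = c ^ n • (List.ofFn g).prod := by
  intro n
  induction n with
  | zero => simp
  | succ n ih =>
    intro c g
    rw [List.ofFn_succ, List.ofFn_succ, List.prod_cons, List.prod_cons, ih c (fun j => g j.succ),
      smul_mul_smul_comm, pow_succ]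
    ring_nf

lemma mycommute_mul {a b c : A} (h1 : c * a = -(a * c)) (h2 : c * b = -(b * c)) :
    Commute c (a * b) := by
  show c * (a * b) = (a * b) * c
  calc c * (a * b) = (c * a) * b := by rw [mul_assoc]
    _ = -((a * c) * b) := by rw [h1, neg_mul]
    _ = -(a * (c * b)) := by rw [mul_assoc]
    _ = a * (b * c) := by rw [h2, mul_neg, neg_neg]
    _ = (a * b) * c := by rw [mul_assoc]

end ListAux

section Factors

variable {V : Type*} [AddCommGroup V] [Module ℂ V] (Q : QuadraticForm ℂ V)

lemma anticomm_of_polar_zero {x y : V} (h : QuadraticMap.polar (⇑Q) x y = 0) :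
    ι Q x * ι Q y = -(ι Q y * ι Q x) := by
  rw [ι_mul_ι_comm, h, map_zero, zero_sub]

lemma ba_eq {x y : V} (h : QuadraticMap.polar (⇑Q) x y = 2) :
    ι Q y * ι Q x = 2 - ι Q x * ι Q y := by
  rw [ι_mul_ι_comm, QuadraticMap.polar_comm, h, map_ofNat]

lemma factor_sq {x y : V} (hx : Q x = 0) (hy : Q y = 0)
    (hp : QuadraticMap.polar (⇑Q) x y = 2) :
    (1 - ι Q x * ι Q y) * (1 - ι Q x * ι Q y) = 1 := by
  have ha : ι Q x * ι Q x = 0 := by rw [ι_sq_scalar, hx, map_zero]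
  have hb : ι Q y * ι Q y = 0 := by rw [ι_sq_scalar, hy, map_zero]
  have h1 : ι Q x * ι Q y * (ι Q x * ι Q y) = 2 * (ι Q x * ι Q y) := by
    calc ι Q x * ι Q y * (ι Q x * ι Q y) = ι Q x * (ι Q y * ι Q x) * ι Q y := by noncomm_ring
      _ = ι Q x * (2 - ι Q x * ι Q y) * ι Q y := by rw [ba_eq Q hp]
      _ = 2 * (ι Q x * ι Q y) - (ι Q x * ι Q x) * (ι Q y * ι Q y) := by noncomm_ring
      _ = 2 * (ι Q x * ι Q y) := by rw [ha, zero_mul, sub_zero]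
  calc (1 - ι Q x * ι Q y) * (1 - ι Q x * ι Q y)
      = 1 - 2 * (ι Q x * ι Q y) + ι Q x * ι Q y * (ι Q x * ι Q y) := by noncomm_ring
    _ = 1 := by rw [h1]; noncomm_ring

lemma factor_star {x y : V} (hp : QuadraticMap.polar (⇑Q) x y = 2) :
    star (1 - ι Q x * ι Q y) = -(1 - ι Q x * ι Q y) := by
  rw [star_sub, star_one, star_mul, star_ι, star_ι, neg_mul_neg, ba_eq Q hp,
    show (2:CliffordAlgebra Q) = 1 + 1 from by norm_num]
  noncomm_ring

lemma factor_commute_vec {x y z : V} (hxz : QuadraticMap.polar (⇑Q) x z = 0)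
    (hyz : QuadraticMap.polar (⇑Q) y z = 0) :
    Commute (ι Q z) (1 - ι Q x * ι Q y) := by
  have h1 := anticomm_of_polar_zero Q ((QuadraticMap.polar_comm (⇑Q) z x).trans hxz)
  have h2 := anticomm_of_polar_zero Q ((QuadraticMap.polar_comm (⇑Q) z y).trans hyz)
  exact (Commute.one_right _).sub_right (mycommute_mul h1 h2)

lemma factor_commute {x y z w : V} (hxz : QuadraticMap.polar (⇑Q) x z = 0)
    (hxw : QuadraticMap.polar (⇑Q) x w = 0) (hyz : QuadraticMap.polar (⇑Q) y z = 0)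
    (hyw : QuadraticMap.polar (⇑Q) y w = 0) :
    Commute (1 - ι Q x * ι Q y) (1 - ι Q z * ι Q w) := by
  have h1 := factor_commute_vec Q hxz hyz
  have h2 := factor_commute_vec Q hxw hyw
  exact (Commute.one_right _).sub_right (h1.mul_left h2).symm

lemma factor_anticomm_left {x y : V} (hx : Q x = 0)
    (hp : QuadraticMap.polar (⇑Q) x y = 2) :
    (1 - ι Q x * ι Q y) * ι Q x = -(ι Q x * (1 - ι Q x * ι Q y)) := by
  have ha : ι Q x * ι Q x = 0 := by rw [ι_sq_scalar, hx, map_zero]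
  have key : ι Q x * ι Q y * ι Q x = 2 * ι Q x := by
    calc ι Q x * ι Q y * ι Q x = ι Q x * (ι Q y * ι Q x) := by rw [mul_assoc]
      _ = ι Q x * (2 - ι Q x * ι Q y) := by rw [ba_eq Q hp]
      _ = 2 * ι Q x - (ι Q x * ι Q x) * ι Q y := by noncomm_ring
      _ = 2 * ι Q x := by rw [ha, zero_mul, sub_zero]
  calc (1 - ι Q x * ι Q y) * ι Q x = ι Q x - ι Q x * ι Q y * ι Q x := by noncomm_ring
    _ = ι Q x - 2 * ι Q x := by rw [key]
    _ = -(ι Q x - ι Q x * (ι Q x * ι Q y)) := by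
        rw [← mul_assoc, ha, zero_mul, sub_zero,
          show (2:CliffordAlgebra Q) = 1 + 1 from by norm_num]
        noncomm_ring
    _ = -(ι Q x * (1 - ι Q x * ι Q y)) := by noncomm_ring

lemma factor_anticomm_right {x y : V} (hy : Q y = 0)
    (hp : QuadraticMap.polar (⇑Q) x y = 2) :
    (1 - ι Q x * ι Q y) * ι Q y = -(ι Q y * (1 - ι Q x * ι Q y)) := by
  have hb : ι Q y * ι Q y = 0 := by rw [ι_sq_scalar, hy, map_zero]
  have key : ι Q y * (ι Q x * ι Q y) = 2 * ι Q y := by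
    calc ι Q y * (ι Q x * ι Q y) = (ι Q y * ι Q x) * ι Q y := by rw [mul_assoc]
      _ = (2 - ι Q x * ι Q y) * ι Q y := by rw [ba_eq Q hp]
      _ = 2 * ι Q y - ι Q x * (ι Q y * ι Q y) := by noncomm_ring
      _ = 2 * ι Q y := by rw [hb, mul_zero, sub_zero]
  calc (1 - ι Q x * ι Q y) * ι Q y = ι Q y - ι Q x * (ι Q y * ι Q y) := by noncomm_ring
    _ = ι Q y := by rw [hb, mul_zero, sub_zero]
    _ = -(ι Q y - 2 * ι Q y) := by
        rw [show (2:CliffordAlgebra Q) = 1 + 1 from by norm_num]; noncomm_ring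
    _ = -(ι Q y * (1 - ι Q x * ι Q y)) := by rw [mul_sub, mul_one, key]

end Factors

section E0

variable {V : Type*} [AddCommGroup V] [Module ℂ V] (Q : QuadraticForm ℂ V)

noncomputable def hypE0 {n : ℕ} (e f : Fin n → V) : CliffordAlgebra Q :=
  (List.ofFn fun j => (1 : CliffordAlgebra Q) - ι Q (e j) * ι Q (f j)).prod

variable {Q}

lemma IsHyperbolicFamily.tail {n : ℕ} {e f : Fin (n+1) → V}
    (h : IsHyperbolicFamily Q e f) :
    IsHyperbolicFamily Q (e ∘ Fin.succ) (f ∘ Fin.succ) := by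
  obtain ⟨he, hf, hef, hee, hff⟩ := h
  refine ⟨fun j => he _, fun j => hf _, fun i j => ?_, fun i j => hee _ _, fun i j => hff _ _⟩
  simp only [Function.comp_apply, hef, Fin.succ_inj]

lemma IsHyperbolicFamily.factor_comm {n : ℕ} {e f : Fin n → V}
    (h : IsHyperbolicFamily Q e f) {i j : Fin n} (hij : i ≠ j) :
    Commute (1 - ι Q (e i) * ι Q (f i)) (1 - ι Q (e j) * ι Q (f j)) := by
  obtain ⟨he, hf, hef, hee, hff⟩ := h
  refine factor_commute Q (hee i j) ?_ ?_ (hff i j)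
  · rw [hef, if_neg hij]
  · rw [QuadraticMap.polar_comm, hef, if_neg (Ne.symm hij)]

lemma hypE0_sq {n : ℕ} {e f : Fin n → V} (h : IsHyperbolicFamily Q e f) :
    hypE0 Q e f * hypE0 Q e f = 1 := by
  obtain ⟨he, hf, hef, hee, hff⟩ := h
  refine myprod_sq _ ?_ ?_
  · intro x hx y hy
    rw [List.mem_ofFn] at hx hy
    obtain ⟨i, rfl⟩ := hx
    obtain ⟨j, rfl⟩ := hy
    rcases eq_or_ne i j with rfl | hij
    · exact Commute.refl _
    · exact IsHyperbolicFamily.factor_comm ⟨he, hf, hef, hee, hff⟩ hij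
  · intro x hx
    rw [List.mem_ofFn] at hx
    obtain ⟨j, rfl⟩ := hx
    exact factor_sq Q (he j) (hf j) (by simpa using hef j j)

lemma hypE0_star {n : ℕ} {e f : Fin n → V} (h : IsHyperbolicFamily Q e f) :
    star (hypE0 Q e f) = ((-1 : ℂ) ^ n) • hypE0 Q e f := by
  induction n with
  | zero => simp [hypE0]
  | succ n ih =>
    obtain ⟨he, hf, hef, hee, hff⟩ := h
    have htail := IsHyperbolicFamily.tail ⟨he, hf, hef, hee, hff⟩
    have hT := ih htail
    have hcomm : Commute (1 - ι Q (e 0) * ι Q (f 0)) (hypE0 Q (e ∘ Fin.succ) (f ∘ Fin.succ)) := by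
      refine Commute.list_prod_right _ _ fun y hy => ?_
      rw [List.mem_ofFn] at hy
      obtain ⟨j, rfl⟩ := hy
      exact IsHyperbolicFamily.factor_comm ⟨he, hf, hef, hee, hff⟩ (Fin.succ_ne_zero j).symm
    have hstar0 : star (1 - ι Q (e 0) * ι Q (f 0)) = -(1 - ι Q (e 0) * ι Q (f 0)) :=
      factor_star Q (by simpa using hef 0 0)
    rw [hypE0, List.ofFn_succ, List.prod_cons, star_mul, hstar0]
    have : (List.ofFn fun j : Fin n => (1:CliffordAlgebra Q) -
        ι Q (e j.succ) * ι Q (f j.succ)).prod = hypE0 Q (e ∘ Fin.succ) (f ∘ Fin.succ) := rfl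
    rw [this, hT, smul_mul_assoc, mul_neg, ← hcomm.eq, pow_succ]
    module



lemma hypE0_anticomm {n : ℕ} {e f : Fin n → V} (h : IsHyperbolicFamily Q e f) (k : Fin n) :
    hypE0 Q e f * ι Q (e k) = -(ι Q (e k) * hypE0 Q e f) ∧
    hypE0 Q e f * ι Q (f k) = -(ι Q (f k) * hypE0 Q e f) := by
  induction n with
  | zero => exact k.elim0
  | succ n ih =>
    obtain ⟨he, hf, hef, hee, hff⟩ := h
    have htail := IsHyperbolicFamily.tail (Q := Q) (e := e) (f := f) ⟨he, hf, hef, hee, hff⟩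
    set P0 : CliffordAlgebra Q := 1 - ι Q (e 0) * ι Q (f 0) with hP0
    set T : CliffordAlgebra Q := hypE0 Q (e ∘ Fin.succ) (f ∘ Fin.succ) with hTdef
    have hsplit : hypE0 Q e f = P0 * T := by
      rw [hypE0, List.ofFn_succ, List.prod_cons]; rfl
    -- commutation of a vector with T
    have hvecT : ∀ z : V, (∀ j : Fin n, QuadraticMap.polar (⇑Q) (e j.succ) z = 0) →
        (∀ j : Fin n, QuadraticMap.polar (⇑Q) (f j.succ) z = 0) → Commute (ι Q z) T := by
      intro z h1 h2
      refine Commute.list_prod_right _ _ fun y hy => ?_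
      rw [List.mem_ofFn] at hy
      obtain ⟨j, rfl⟩ := hy
      exact factor_commute_vec Q (h1 j) (h2 j)
    induction k using Fin.cases with
    | zero =>
      have hce : Commute (ι Q (e 0)) T :=
        hvecT _ (fun j => hee _ _)
          (fun j => by rw [QuadraticMap.polar_comm, hef, if_neg (Fin.succ_ne_zero j).symm])
      have hcf : Commute (ι Q (f 0)) T :=
        hvecT _ (fun j => by rw [hef, if_neg (Fin.succ_ne_zero j)])
          (fun j => hff _ _)
      constructor
      · calc hypE0 Q e f * ι Q (e 0) = P0 * (ι Q (e 0) * T) := by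
              rw [hsplit, mul_assoc, ← hce.eq]
          _ = (P0 * ι Q (e 0)) * T := by rw [mul_assoc]
          _ = -(ι Q (e 0) * P0) * T := by
              rw [factor_anticomm_left Q (he 0) (by simpa using hef 0 0)]
          _ = -(ι Q (e 0) * hypE0 Q e f) := by rw [hsplit]; noncomm_ring
      · calc hypE0 Q e f * ι Q (f 0) = P0 * (ι Q (f 0) * T) := by
              rw [hsplit, mul_assoc, ← hcf.eq]
          _ = (P0 * ι Q (f 0)) * T := by rw [mul_assoc]
          _ = -(ι Q (f 0) * P0) * T := by
              rw [factor_anticomm_right Q (hf 0) (by simpa using hef 0 0)]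
          _ = -(ι Q (f 0) * hypE0 Q e f) := by rw [hsplit]; noncomm_ring
    | succ k' =>
      have hIH := ih htail k'
      have hce : Commute (ι Q (e k'.succ)) P0 :=
        factor_commute_vec Q (hee _ _)
          (by rw [QuadraticMap.polar_comm, hef, if_neg (Fin.succ_ne_zero k')])
      have hcf : Commute (ι Q (f k'.succ)) P0 :=
        factor_commute_vec Q (by rw [hef, if_neg (Fin.succ_ne_zero k').symm]) (hff _ _)
      have he1 : T * ι Q (e k'.succ) = -(ι Q (e k'.succ) * T) := hIH.1
      have hf1 : T * ι Q (f k'.succ) = -(ι Q (f k'.succ) * T) := hIH.2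
      constructor
      · calc hypE0 Q e f * ι Q (e k'.succ) = P0 * (T * ι Q (e k'.succ)) := by
              rw [hsplit, mul_assoc]
          _ = -(P0 * ι Q (e k'.succ) * T) := by rw [he1]; noncomm_ring
          _ = -(ι Q (e k'.succ) * hypE0 Q e f) := by rw [← hce.eq, hsplit]; noncomm_ring
      · calc hypE0 Q e f * ι Q (f k'.succ) = P0 * (T * ι Q (f k'.succ)) := by
              rw [hsplit, mul_assoc]
          _ = -(P0 * ι Q (f k'.succ) * T) := by rw [hf1]; noncomm_ring
          _ = -(ι Q (f k'.succ) * hypE0 Q e f) := by rw [← hcf.eq, hsplit]; noncomm_ring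

end E0

section Rest

variable {V : Type*} [AddCommGroup V] [Module ℂ V] {Q : QuadraticForm ℂ V}

lemma hypE0_conj {n : ℕ} {e f : Fin n → V} (h : IsHyperbolicFamily Q e f)
    (b : Module.Basis (Fin n ⊕ Fin n) ℂ V) (hb : ⇑b = Sum.elim e f) (v : V) :
    hypE0 Q e f * ι Q v * hypE0 Q e f = -(ι Q v) := by
  set E : CliffordAlgebra Q := hypE0 Q e f with hE
  have hsq : E * E = 1 := hypE0_sq h
  let L1 : V →ₗ[ℂ] CliffordAlgebra Q :=
    (LinearMap.mulRight ℂ E).comp ((LinearMap.mulLeft ℂ E).comp (ι Q))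
  let L2 : V →ₗ[ℂ] CliffordAlgebra Q := -(ι Q)
  have key : L1 = L2 := by
    refine b.ext fun i => ?_
    have hbi : b i = Sum.elim e f i := by rw [hb]
    have hgen : ∀ z : V, (E * ι Q z = -(ι Q z * E)) → L1 (b i) = L2 (b i) → True := fun _ _ _ => trivial
    cases i with
    | inl k =>
      have ha := (hypE0_anticomm h k).1
      simp only [L1, L2, LinearMap.comp_apply, LinearMap.mulLeft_apply,
        LinearMap.mulRight_apply, LinearMap.neg_apply, hbi, Sum.elim_inl]
      rw [ha]
      calc -(ι Q (e k) * E) * E = -(ι Q (e k) * (E * E)) := by noncomm_ring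
        _ = -(ι Q (e k)) := by rw [hsq, mul_one]
    | inr k =>
      have ha := (hypE0_anticomm h k).2
      simp only [L1, L2, LinearMap.comp_apply, LinearMap.mulLeft_apply,
        LinearMap.mulRight_apply, LinearMap.neg_apply, hbi, Sum.elim_inr]
      rw [ha]
      calc -(ι Q (f k) * E) * E = -(ι Q (f k) * (E * E)) := by noncomm_ring
        _ = -(ι Q (f k)) := by rw [hsq, mul_one]
  have := congrArg (fun L => L v) key
  simpa [L1, L2, mul_assoc] using this

lemma hypE0_mem_even {n : ℕ} (e f : Fin n → V) : hypE0 Q e f ∈ even Q := by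
  refine list_prod_mem fun x hx => ?_
  rw [List.mem_ofFn] at hx
  obtain ⟨j, rfl⟩ := hx
  refine sub_mem (one_mem _) ?_
  show ι Q (e j) * ι Q (f j) ∈ evenOdd Q 0
  exact ι_mul_ι_mem_evenOdd_zero Q _ _

lemma hypE0_mem_lipschitz {n : ℕ} {e f : Fin n → V} (h : IsHyperbolicFamily Q e f) :
    (Complex.I ^ n • hypE0 Q e f) ∈
      (lipschitzGroup Q).toSubmonoid.map (Units.coeHom <| CliffordAlgebra Q) := by
  obtain ⟨he, hf, hef, hee, hff⟩ := h
  -- the scaled vectors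
  set u : Fin n → V := fun j => (Complex.I / 2) • (e j + f j) with hu
  set w : Fin n → V := fun j => e j - f j with hw
  have hQu : ∀ j, IsUnit (Q (u j)) := by
    intro j
    have : Q (e j + f j) = 2 := by
      have := QuadraticMap.polar (⇑Q) (e j) (f j)
      rw [show Q (e j + f j) = QuadraticMap.polar (⇑Q) (e j) (f j) + Q (e j) + Q (f j) from by
        rw [QuadraticMap.polar]; ring, he, hf, hef]
      simp
    rw [hu]
    simp only [QuadraticMap.map_smul, this]
    refine IsUnit.mul (IsUnit.mul ?_ ?_) (by norm_num) <;>
      simp [Complex.I_ne_zero, isUnit_iff_ne_zero]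
  have hQw : ∀ j, IsUnit (Q (w j)) := by
    intro j
    have : Q (e j - f j) = -2 := by
      rw [sub_eq_add_neg, show Q (e j + -f j) = QuadraticMap.polar (⇑Q) (e j) (-f j)
          + Q (e j) + Q (-f j) from by rw [QuadraticMap.polar]; ring,
        QuadraticMap.polar_neg_right, QuadraticMap.map_neg, he, hf, hef]
      norm_num
    rw [hw]
    simp only [this]
    exact (isUnit_iff_ne_zero).2 (by norm_num)
  -- units
  let νu : Fin n → (CliffordAlgebra Q)ˣ := fun j => (isUnit_ι_of_isUnit Q (hQu j)).unit
  let νw : Fin n → (CliffordAlgebra Q)ˣ := fun j => (isUnit_ι_of_isUnit Q (hQw j)).unit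
  have hmemu : ∀ j, νu j ∈ lipschitzGroup Q := fun j =>
    Subgroup.subset_closure ⟨u j, (IsUnit.unit_spec _).symm⟩
  have hmemw : ∀ j, νw j ∈ lipschitzGroup Q := fun j =>
    Subgroup.subset_closure ⟨w j, (IsUnit.unit_spec _).symm⟩
  let U : (CliffordAlgebra Q)ˣ := (List.ofFn fun j => νu j * νw j).prod
  have hU : U ∈ lipschitzGroup Q := by
    refine list_prod_mem fun x hx => ?_
    rw [List.mem_ofFn] at hx
    obtain ⟨j, rfl⟩ := hx
    exact mul_mem (hmemu j) (hmemw j)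
  refine ⟨U, hU, ?_⟩
  show (U : CliffordAlgebra Q) = _
  have hval : (U : CliffordAlgebra Q) = (List.ofFn fun j => ι Q (u j) * ι Q (w j)).prod := by
    rw [show (U : CliffordAlgebra Q) = Units.coeHom (CliffordAlgebra Q) U from rfl]
    rw [map_list_prod, List.map_ofFn]
    refine congrArg List.prod (congrArg List.ofFn ?_)
    funext j
    simp [νu, νw, Function.comp]
  -- pointwise computation
  have hpt : ∀ j, ι Q (u j) * ι Q (w j) =
      Complex.I • ((1 : CliffordAlgebra Q) - ι Q (e j) * ι Q (f j)) := by
    intro j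
    have ha : ι Q (e j) * ι Q (e j) = 0 := by rw [ι_sq_scalar, he, map_zero]
    have hb : ι Q (f j) * ι Q (f j) = 0 := by rw [ι_sq_scalar, hf, map_zero]
    have hba : ι Q (f j) * ι Q (e j) = 2 - ι Q (e j) * ι Q (f j) :=
      ba_eq Q (by simpa using hef j j)
    have hprod : (ι Q (e j) + ι Q (f j)) * (ι Q (e j) - ι Q (f j)) =
        2 * (1 - ι Q (e j) * ι Q (f j)) := by
      calc (ι Q (e j) + ι Q (f j)) * (ι Q (e j) - ι Q (f j))
          = ι Q (e j) * ι Q (e j) - ι Q (f j) * ι Q (f j) +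
            ι Q (f j) * ι Q (e j) - ι Q (e j) * ι Q (f j) := by noncomm_ring
        _ = 2 * (1 - ι Q (e j) * ι Q (f j)) := by
            rw [ha, hb, hba, show (2:CliffordAlgebra Q) = 1 + 1 from by norm_num]
            noncomm_ring
    rw [hu, hw]
    simp only [map_smul, map_sub, map_add, smul_mul_assoc]
    rw [show (ι Q (e j) + ι Q (f j)) * (ι Q (e j) - ι Q (f j)) =
        2 * (1 - ι Q (e j) * ι Q (f j)) from hprod]
    rw [show (2 : CliffordAlgebra Q) * (1 - ι Q (e j) * ι Q (f j)) =
        (2 : ℂ) • (1 - ι Q (e j) * ι Q (f j)) from by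
      rw [Algebra.smul_def, map_ofNat]]
    rw [smul_smul]
    norm_num
  rw [hval]
  rw [show (List.ofFn fun j => ι Q (u j) * ι Q (w j)) =
      (List.ofFn fun j => Complex.I • ((1 : CliffordAlgebra Q) - ι Q (e j) * ι Q (f j))) from by
    congr 1; funext j; exact hpt j]
  rw [myprod_smul]
  rfl

end Rest

/-- `ℰ` lies in the spin group, conjugation of vectors by `ℰ` is `(−1)^{n+1}`, and
`(−1)ⁿ ℰ` is the inverse of `ℰ`; thus `ℰ` and `−ℰ` lie over `−Id ∈ SO(V)`. -/
theorem cliffordCenterE_mem_spinGroup_and_conj {V : Type*} [AddCommGroup V] [Module ℂ V]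
    (Q : QuadraticForm ℂ V) {n : ℕ} (e f : Fin n → V)
    (h : IsHyperbolicBasis Q e f) :
    cliffordCenterE Q e f ∈ spinGroup Q ∧
      (∀ v : V, cliffordCenterE Q e f * ι Q v * cliffordCenterE Q e f =
        ((-1 : ℂ) ^ (n + 1)) • ι Q v) ∧
      cliffordCenterE Q e f * (((-1 : ℂ) ^ n) • cliffordCenterE Q e f) = 1 := by
  obtain ⟨hfam, b, hb⟩ := h
  have hE : cliffordCenterE Q e f = Complex.I ^ n • hypE0 Q e f := rfl
  have hsq := hypE0_sq hfam
  have hstar := hypE0_star hfam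
  have hsc : Complex.I ^ n * ((-1 : ℂ) ^ n * Complex.I ^ n) = 1 := by
    rw [← mul_pow, ← mul_pow]
    norm_num [Complex.I_mul_I]
  constructor
  · rw [spinGroup, Submonoid.mem_inf, pinGroup, Submonoid.mem_inf]
    refine ⟨⟨?_, ?_⟩, ?_⟩
    · rw [hE]; exact hypE0_mem_lipschitz hfam
    · rw [Unitary.mem_iff, hE, CliffordAlgebra.star_smul, hstar, smul_smul,
        smul_mul_smul_comm, smul_mul_smul_comm, hsq]
      constructor
      · rw [show Complex.I ^ n * (-1 : ℂ) ^ n * Complex.I ^ n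
            = Complex.I ^ n * ((-1 : ℂ) ^ n * Complex.I ^ n) from by ring, hsc, one_smul]
      · rw [show Complex.I ^ n * (Complex.I ^ n * (-1 : ℂ) ^ n) = 1 from by
            linear_combination hsc, one_smul]
    · show _ ∈ even Q
      rw [hE]
      exact Subalgebra.smul_mem _ (hypE0_mem_even e f) _
  · constructor
    · intro v
      have hconj := hypE0_conj hfam b hb v
      rw [hE]
      calc (Complex.I ^ n • hypE0 Q e f) * ι Q v * (Complex.I ^ n • hypE0 Q e f)
          = (Complex.I ^ n * Complex.I ^ n) • (hypE0 Q e f * ι Q v * hypE0 Q e f) := by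
            rw [smul_mul_assoc, smul_mul_smul_comm]
        _ = ((-1 : ℂ) ^ n) • (-(ι Q v)) := by rw [hconj, ← mul_pow, Complex.I_mul_I]
        _ = ((-1 : ℂ) ^ (n + 1)) • ι Q v := by rw [pow_succ, mul_smul, neg_one_smul]
    · rw [hE, smul_smul, smul_mul_smul_comm, hsq,
        show Complex.I ^ n * ((-1 : ℂ) ^ n * Complex.I ^ n) = 1 from hsc, one_smul]
end

section
/- Let n ≥ 1, let (e_1, …, e_n; f_1, …, f_n) be a hyperbolic basis of the 2n-dimensional complex quadratic space (V, Q), and set ℰ = i^n · ∏_{j=1}^n (1 − ι(e_j)ι(f_j)) in C(V,Q). Then ℰ ∉ {1, −1}, the set {1, −1, ℰ, −ℰ} is a subgroup of order 4 of the group of units of C(V,Q), and this subgroup is cyclic of order 4 generated by ℰ when n is odd, while it is isomorphic to ℤ/2 × ℤ/2 (i.e., ℰ² = 1 and ℰ ≠ ±1) when n is even. -/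
open CliffordAlgebra

private lemma list_prod_sq {A : Type*} [Monoid A] :
    ∀ l : List A, (∀ x ∈ l, x * x = 1) → (∀ x ∈ l, ∀ y ∈ l, x * y = y * x) →
      l.prod * l.prod = 1
  | [], _, _ => by simp
  | a :: t, h, hc => by
    have hcomm : Commute a t.prod :=
      Commute.list_prod_right _ _ fun y hy => hc a (by simp) y (by simp [hy])
    have iht : t.prod * t.prod = 1 :=
      list_prod_sq t (fun x hx => h x (by simp [hx]))
        (fun x hx y hy => hc x (by simp [hx]) y (by simp [hy]))
    calc (a :: t).prod * (a :: t).prod = a * (t.prod * a) * t.prod := by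
          simp [List.prod_cons, mul_assoc]
      _ = (a * a) * (t.prod * t.prod) := by rw [← hcomm.eq]; simp only [mul_assoc]
      _ = 1 := by rw [h a (by simp), iht, one_mul]

section
variable {V : Type*} [AddCommGroup V] [Module ℂ V] {Q : QuadraticForm ℂ V} {n : ℕ}
  {e f : Fin n → V}

private lemma anti_of_polar_zero (x y : V) (hxy : QuadraticMap.polar (⇑Q) x y = 0) :
    ι Q x * ι Q y = -(ι Q y * ι Q x) := by
  have h := ι_mul_ι_add_swap (Q := Q) x y
  rw [hxy, map_zero] at h
  exact eq_neg_of_add_eq_zero_left h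

private lemma swap_of_polar_two (x y : V) (hxy : QuadraticMap.polar (⇑Q) x y = 2) :
    ι Q y * ι Q x = (2 : CliffordAlgebra Q) - ι Q x * ι Q y := by
  have h := ι_mul_ι_add_swap (Q := Q) x y
  rw [hxy, map_ofNat] at h
  rw [← h]; abel

private lemma factor_sq_s5 (h : IsHyperbolicFamily Q e f) (j : Fin n) :
    (1 - ι Q (e j) * ι Q (f j)) * (1 - ι Q (e j) * ι Q (f j)) = 1 := by
  set E := ι Q (e j) with hE
  set F := ι Q (f j) with hFdef
  have hF : F * F = 0 := by rw [hFdef, ι_sq_scalar, h.2.1 j, map_zero]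
  have hFE : F * E = (2 : CliffordAlgebra Q) - E * F := by
    refine swap_of_polar_two (e j) (f j) ?_
    rw [h.2.2.1 j j, if_pos rfl]
  have key : E * F * (E * F) = 2 * (E * F) := by
    have h1 : E * F * (E * F) = E * (F * E * F) := by noncomm_ring
    rw [h1, hFE, sub_mul, mul_sub, mul_assoc E F F, hF, mul_zero, mul_zero, sub_zero,
      two_mul, two_mul, mul_add]
  calc (1 - E * F) * (1 - E * F) = 1 - E * F - E * F + E * F * (E * F) := by noncomm_ring
    _ = 1 - E * F - E * F + 2 * (E * F) := by rw [key]
    _ = 1 := by noncomm_ring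
end

private lemma anticomm_pair_comm {A : Type*} [Ring A] {a b c d : A}
    (hca : c * a = -(a * c)) (hcb : c * b = -(b * c))
    (hda : d * a = -(a * d)) (hdb : d * b = -(b * d)) :
    (a * b) * (c * d) = (c * d) * (a * b) := by
  have hbc : b * c = -(c * b) := by rw [hcb, neg_neg]
  calc (a * b) * (c * d) = a * (b * c) * d := by simp only [mul_assoc]
    _ = -(a * c * (b * d)) := by rw [hbc]; simp only [mul_neg, neg_mul, mul_assoc]
    _ = (c * d) * (a * b) := by
        calc -(a * c * (b * d)) = -(a * c * -(d * b)) := by rw [hdb, neg_neg]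
          _ = (a * c) * (d * b) := by simp only [mul_neg, neg_neg]
          _ = -(-(a * c) * (d * b)) := by simp only [neg_mul, neg_neg]
          _ = -(c * a * (d * b)) := by rw [hca]
          _ = -(c * (a * d) * b) := by simp only [mul_assoc]
          _ = c * (d * a) * b := by rw [hda]; simp only [mul_neg, neg_mul, neg_neg, mul_assoc]
          _ = (c * d) * (a * b) := by simp only [mul_assoc]

section
variable {V : Type*} [AddCommGroup V] [Module ℂ V] {Q : QuadraticForm ℂ V} {n : ℕ}
  {e f : Fin n → V}

private lemma factor_commute_s5 (h : IsHyperbolicFamily Q e f) (i j : Fin n) :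
    Commute (1 - ι Q (e i) * ι Q (f i)) (1 - ι Q (e j) * ι Q (f j)) := by
  rcases eq_or_ne i j with rfl | hij
  · rfl
  have c : Commute (ι Q (e i) * ι Q (f i)) (ι Q (e j) * ι Q (f j)) := by
    refine anticomm_pair_comm ?_ ?_ ?_ ?_
    · exact anti_of_polar_zero _ _ (h.2.2.2.1 j i)
    · refine anti_of_polar_zero _ _ ?_
      rw [h.2.2.1 j i, if_neg hij.symm]
    · refine anti_of_polar_zero _ _ ?_
      rw [QuadraticMap.polar_comm, h.2.2.1 i j, if_neg hij]
    · exact anti_of_polar_zero _ _ (h.2.2.2.2 j i)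
  exact (Commute.one_left _).sub_left ((Commute.one_right _).sub_right c)
end

section
variable {V : Type*} [AddCommGroup V] [Module ℂ V] {Q : QuadraticForm ℂ V} {n : ℕ}
  {e f : Fin n → V}

private lemma prod_factors_sq (h : IsHyperbolicFamily Q e f) :
    (List.ofFn fun j => (1 : CliffordAlgebra Q) - ι Q (e j) * ι Q (f j)).prod *
      (List.ofFn fun j => (1 : CliffordAlgebra Q) - ι Q (e j) * ι Q (f j)).prod = 1 := by
  refine list_prod_sq _ ?_ ?_
  · intro x hx
    rw [List.mem_ofFn] at hx
    obtain ⟨j, rfl⟩ := hx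
    exact factor_sq_s5 h j
  · intro x hx y hy
    rw [List.mem_ofFn] at hx hy
    obtain ⟨i, rfl⟩ := hx
    obtain ⟨j, rfl⟩ := hy
    exact (factor_commute_s5 h i j).eq

private lemma centerE_sq (h : IsHyperbolicFamily Q e f) :
    cliffordCenterE Q e f * cliffordCenterE Q e f = ((-1 : ℂ) ^ n) • 1 := by
  rw [cliffordCenterE, smul_mul_smul_comm, prod_factors_sq h, ← mul_pow, Complex.I_mul_I]
end


section
variable {V : Type*} [AddCommGroup V] [Module ℂ V] {Q : QuadraticForm ℂ V} {n : ℕ}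
  {e f : Fin n → V}

private lemma exists_sigma [NeZero n]
    (hef : ∀ i j, QuadraticMap.polar (⇑Q) (e i) (f j) = if i = j then 2 else 0)
    (hee : ∀ i j, QuadraticMap.polar (⇑Q) (e i) (e j) = 0)
    (hff : ∀ i j, QuadraticMap.polar (⇑Q) (f i) (f j) = 0)
    (b : Module.Basis (Fin n ⊕ Fin n) ℂ V) (hb : ⇑b = Sum.elim e f) :
    ∃ σ : V →ₗ[ℂ] V, (∀ x, Q (σ x) = Q x) ∧
      (∀ j, σ (e j) = if j = 0 then f 0 else e j) ∧
      (∀ j, σ (f j) = if j = 0 then e 0 else f j) := by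
  have hfe : ∀ i j, QuadraticMap.polar (⇑Q) (f i) (e j) = if j = i then 2 else 0 := fun i j => by
    rw [QuadraticMap.polar_comm]; exact hef j i
  have hef' : ∀ i j, QuadraticMap.polar (⇑Q) (e i) (f j) = if j = i then 2 else 0 := fun i j => by
    rw [hef]; by_cases hij : i = j <;> simp [hij, eq_comm]
  have hfe' : ∀ i j, QuadraticMap.polar (⇑Q) (f i) (e j) = if i = j then 2 else 0 := fun i j => by
    rw [hfe]; by_cases hij : i = j <;> simp [hij, eq_comm]
  set g : Fin n ⊕ Fin n → V :=
    Sum.elim (fun j => if j = 0 then f 0 else e j) (fun j => if j = 0 then e 0 else f j) with hg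
  set σ : V →ₗ[ℂ] V := b.constr ℂ g with hσ
  have hσb : ∀ k, σ (b k) = g k := fun k => b.constr_basis ℂ g k
  have heb : ∀ j, e j = b (Sum.inl j) := fun j => by rw [hb]; rfl
  have hfb : ∀ j, f j = b (Sum.inr j) := fun j => by rw [hb]; rfl
  have hσe : ∀ j, σ (e j) = if j = 0 then f 0 else e j := fun j => by
    conv_lhs => rw [heb j, hσb (Sum.inl j)]
    simp [hg]
  have hσf : ∀ j, σ (f j) = if j = 0 then e 0 else f j := fun j => by
    conv_lhs => rw [hfb j, hσb (Sum.inr j)]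
    simp [hg]
  clear heb hfb hσb hσ hg
  have hbil : Q.polarBilin.compl₁₂ σ σ = Q.polarBilin := by
    refine b.ext fun k => b.ext fun l => ?_
    simp only [LinearMap.compl₁₂_apply, QuadraticMap.polarBilin_apply_apply, hb]
    rcases k with i | i <;> rcases l with j | j <;>
      simp only [Sum.elim_inl, Sum.elim_inr, hσe, hσf] <;>
      split_ifs <;>
      simp_all [hef, hef', hee, hff, hfe, hfe']
  have hpol : ∀ x y, QuadraticMap.polar (⇑Q) (σ x) (σ y) = QuadraticMap.polar (⇑Q) x y := by
    intro x y
    have h2 := DFunLike.congr_fun (DFunLike.congr_fun hbil x) y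
    simpa only [LinearMap.compl₁₂_apply, QuadraticMap.polarBilin_apply_apply] using h2
  refine ⟨σ, fun x => ?_, hσe, hσf⟩
  have h2 := hpol x x
  rw [QuadraticMap.polar_self, QuadraticMap.polar_self, nsmul_eq_mul, nsmul_eq_mul] at h2
  exact mul_left_cancel₀ (by norm_num) h2
end


section
variable {V : Type*} [AddCommGroup V] [Module ℂ V] {Q : QuadraticForm ℂ V} {n : ℕ}
  {e f : Fin n → V}

private lemma exists_neg_hom (hn : 1 ≤ n) (h : IsHyperbolicBasis Q e f) :
    ∃ β : CliffordAlgebra Q →ₐ[ℂ] CliffordAlgebra Q,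
      β (cliffordCenterE Q e f) = - cliffordCenterE Q e f := by
  haveI : NeZero n := ⟨by omega⟩
  obtain ⟨hfam, b, hb⟩ := h
  obtain ⟨σ, hQσ, hσe, hσf⟩ := exists_sigma hfam.2.2.1 hfam.2.2.2.1 hfam.2.2.2.2 b hb
  set σᵢ : Q →qᵢ Q := { toLinearMap := σ, map_app' := hQσ } with hσᵢ
  refine ⟨CliffordAlgebra.map σᵢ, ?_⟩
  set β := CliffordAlgebra.map σᵢ with hβ
  have hβι : ∀ x : V, β (ι Q x) = ι Q (σ x) := fun x => map_apply_ι σᵢ x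
  have hfac : ∀ j : Fin n, β ((1 : CliffordAlgebra Q) - ι Q (e j) * ι Q (f j)) =
      if j = 0 then -((1 : CliffordAlgebra Q) - ι Q (e 0) * ι Q (f 0))
      else 1 - ι Q (e j) * ι Q (f j) := by
    intro j
    rw [map_sub, map_one, map_mul, hβι, hβι, hσe, hσf]
    rcases eq_or_ne j 0 with rfl | hj
    · rw [if_pos rfl, if_pos rfl, if_pos rfl,
        swap_of_polar_two (e 0) (f 0) (by rw [hfam.2.2.1, if_pos rfl])]
      rw [neg_sub, sub_sub_eq_add_sub, add_comm (1 : CliffordAlgebra Q), add_sub_assoc]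
      norm_num [sub_eq_add_neg]
    · rw [if_neg hj, if_neg hj, if_neg hj]
  rw [cliffordCenterE, map_smul, map_list_prod, List.map_ofFn]
  obtain ⟨m, rfl⟩ : ∃ m, n = m + 1 := ⟨n - 1, by omega⟩
  have htail : ∀ i : Fin m, β ((1 : CliffordAlgebra Q) - ι Q (e i.succ) * ι Q (f i.succ)) =
      1 - ι Q (e i.succ) * ι Q (f i.succ) := fun i => by
    rw [hfac, if_neg (Fin.succ_ne_zero i)]
  rw [List.ofFn_succ, List.ofFn_succ, List.prod_cons, List.prod_cons]
  simp only [Function.comp]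
  rw [hfac 0, if_pos rfl]
  have htails : (List.ofFn fun i : Fin m =>
        β ((1 : CliffordAlgebra Q) - ι Q (e i.succ) * ι Q (f i.succ))).prod =
      (List.ofFn fun i : Fin m =>
        (1 : CliffordAlgebra Q) - ι Q (e i.succ) * ι Q (f i.succ)).prod := by
    simp only [htail]
  rw [htails, neg_mul, smul_neg]
end

section
variable {V : Type*} [AddCommGroup V] [Module ℂ V]

theorem cliffordCenterE_subgroup' (Q : QuadraticForm ℂ V) {n : ℕ} (hn : 1 ≤ n) (e f : Fin n → V)
    (h : IsHyperbolicBasis Q e f) :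
    cliffordCenterE Q e f ≠ 1 ∧ cliffordCenterE Q e f ≠ -1 ∧
      ∃ u : (CliffordAlgebra Q)ˣ, (u : CliffordAlgebra Q) = cliffordCenterE Q e f ∧
        ∃ H : Subgroup (CliffordAlgebra Q)ˣ,
          ((↑) '' (H : Set (CliffordAlgebra Q)ˣ) : Set (CliffordAlgebra Q)) =
            {1, -1, cliffordCenterE Q e f, -cliffordCenterE Q e f} ∧
          Nat.card H = 4 ∧
          (Odd n → H = Subgroup.zpowers u ∧ orderOf u = 4) ∧
          (Even n → cliffordCenterE Q e f * cliffordCenterE Q e f = 1) := by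
  set E := cliffordCenterE Q e f with hEdef
  set s : ℂ := (-1 : ℂ) ^ n with hsdef
  have hsq : E * E = s • (1 : CliffordAlgebra Q) := centerE_sq h.1
  have hs2 : s * s = 1 := by rw [hsdef, ← mul_pow]; norm_num
  have hs0 : s ≠ 0 := by
    rw [hsdef]; exact pow_ne_zero _ (by norm_num)
  have hE0 : E ≠ 0 := by
    intro h0
    rw [h0, zero_mul] at hsq
    rcases smul_eq_zero.mp hsq.symm with hc | hc
    · exact hs0 hc
    · exact one_ne_zero hc
  have hEnegE : E ≠ -E := by
    intro hEq
    have h2 : (2 : ℂ) • E = 0 := by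
      rw [two_smul]
      nth_rewrite 1 [hEq]
      rw [neg_add_cancel]
    rcases smul_eq_zero.mp h2 with hc | hc
    · norm_num at hc
    · exact hE0 hc
  obtain ⟨β, hβE⟩ := exists_neg_hom hn h
  rw [← hEdef] at hβE
  have hE1 : E ≠ 1 := by
    intro h1
    have h2 : β E = E := by rw [h1, map_one]
    exact hEnegE (by rw [← hβE, h2])
  have hEn1 : E ≠ -1 := by
    intro h1
    have h2 : β E = E := by rw [h1]; simp
    exact hEnegE (by rw [← hβE, h2])
  have h1n1 : (1 : CliffordAlgebra Q) ≠ -1 := by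
    intro hh
    have h2 : (2 : ℂ) • (1 : CliffordAlgebra Q) = 0 := by
      rw [two_smul]
      nth_rewrite 1 [hh]
      rw [neg_add_cancel]
    rcases smul_eq_zero.mp h2 with hc | hc
    · norm_num at hc
    · exact one_ne_zero hc
  have hleft : s • E * E = 1 := by
    rw [smul_mul_assoc, hsq, smul_smul, hs2, one_smul]
  have hright : E * (s • E) = 1 := by
    rw [mul_smul_comm, hsq, smul_smul, hs2, one_smul]
  refine ⟨hE1, hEn1, ⟨E, s • E, hright, hleft⟩, rfl, ?_⟩
  set u : (CliffordAlgebra Q)ˣ := ⟨E, s • E, hright, hleft⟩ with hudef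
  have huval : (u : CliffordAlgebra Q) = E := rfl
  have huu : u * u = 1 ∨ u * u = -1 := by
    rcases Nat.even_or_odd n with he | ho
    · left
      ext
      rw [Units.val_mul, huval, hsq, hsdef, he.neg_one_pow, one_smul, Units.val_one]
    · right
      ext
      rw [Units.val_mul, huval, hsq, hsdef, ho.neg_one_pow, neg_smul, one_smul,
        Units.val_neg, Units.val_one]
  have n1 : (1 : (CliffordAlgebra Q)ˣ) ≠ -1 := fun hh =>
    h1n1 (by simpa using congrArg Units.val hh)
  have u1 : u ≠ 1 := fun hh => hE1 (by simpa [huval] using congrArg Units.val hh)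
  have un1 : u ≠ -1 := fun hh => hEn1 (by simpa [huval] using congrArg Units.val hh)
  have unu : u ≠ -u := fun hh => hEnegE (by simpa [huval] using congrArg Units.val hh)
  have nu1 : -u ≠ 1 := fun hh => un1 (by rw [← neg_neg u, hh])
  have nun1 : -u ≠ -1 := fun hh => u1 (neg_injective hh)
  have hmul : ∀ a b : (CliffordAlgebra Q)ˣ, a ∈ ({1, -1, u, -u} : Set (CliffordAlgebra Q)ˣ) →
      b ∈ ({1, -1, u, -u} : Set (CliffordAlgebra Q)ˣ) →
      a * b ∈ ({1, -1, u, -u} : Set (CliffordAlgebra Q)ˣ) := by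
    intro a b ha hb
    simp only [Set.mem_insert_iff, Set.mem_singleton_iff] at ha hb ⊢
    rcases huu with h2 | h2 <;> rcases ha with rfl | rfl | rfl | rfl <;>
      rcases hb with rfl | rfl | rfl | rfl <;>
      simp [h2, neg_mul, mul_neg, neg_neg]
  have hinv : ∀ a : (CliffordAlgebra Q)ˣ, a ∈ ({1, -1, u, -u} : Set (CliffordAlgebra Q)ˣ) →
      a⁻¹ ∈ ({1, -1, u, -u} : Set (CliffordAlgebra Q)ˣ) := by
    intro a ha
    simp only [Set.mem_insert_iff, Set.mem_singleton_iff] at ha ⊢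
    rcases huu with h2 | h2 <;> rcases ha with rfl | rfl | rfl | rfl
    · exact Or.inl inv_one
    · exact Or.inr (Or.inl (inv_eq_of_mul_eq_one_right (by simp)))
    · exact Or.inr (Or.inr (Or.inl (inv_eq_of_mul_eq_one_right h2)))
    · exact Or.inr (Or.inr (Or.inr (inv_eq_of_mul_eq_one_right (by simp [h2]))))
    · exact Or.inl inv_one
    · exact Or.inr (Or.inl (inv_eq_of_mul_eq_one_right (by simp)))
    · exact Or.inr (Or.inr (Or.inr (inv_eq_of_mul_eq_one_right (by simp [h2]))))
    · exact Or.inr (Or.inr (Or.inl (inv_eq_of_mul_eq_one_right (by simp [h2]))))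
  set Hgrp : Subgroup (CliffordAlgebra Q)ˣ :=
    { carrier := {1, -1, u, -u}, one_mem' := Set.mem_insert _ _,
      mul_mem' := fun {a b} ha hb => hmul a b ha hb,
      inv_mem' := fun {a} ha => hinv a ha } with hHdef
  have hmemH : ∀ x : (CliffordAlgebra Q)ˣ,
      x ∈ Hgrp ↔ (x = 1 ∨ x = -1 ∨ x = u ∨ x = -u) := fun x => by
    rw [hHdef]
    simp [Subgroup.mem_mk, Set.mem_insert_iff]
  refine ⟨Hgrp, ?_, ?_, ?_, ?_⟩
  · show Units.val '' ({1, -1, u, -u} : Set (CliffordAlgebra Q)ˣ) = _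
    simp only [Set.image_insert_eq, Set.image_singleton, Units.val_one, Units.val_neg, huval]
  · have hcoe : Nat.card Hgrp = ({1, -1, u, -u} : Set (CliffordAlgebra Q)ˣ).ncard := by
      rw [← Nat.card_coe_set_eq]
      rfl
    rw [hcoe,
      Set.ncard_insert_of_notMem (by
        simp only [Set.mem_insert_iff, Set.mem_singleton_iff]
        push_neg
        exact ⟨n1, Ne.symm u1, Ne.symm nu1⟩),
      Set.ncard_insert_of_notMem (by
        simp only [Set.mem_insert_iff, Set.mem_singleton_iff]
        push_neg
        exact ⟨Ne.symm un1, Ne.symm nun1⟩),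
      Set.ncard_pair unu]
  · intro hodd
    have hu2 : u * u = -1 := by
      ext
      rw [Units.val_mul, huval, hsq, hsdef, hodd.neg_one_pow, neg_smul, one_smul,
        Units.val_neg, Units.val_one]
    constructor
    · refine le_antisymm ?_ (Subgroup.zpowers_le.mpr ((hmemH u).mpr (Or.inr (Or.inr (Or.inl rfl)))))
      intro x hx
      rcases (hmemH x).mp hx with rfl | rfl | rfl | rfl
      · exact one_mem _
      · exact ⟨2, by show u ^ (2:ℤ) = -1; rw [zpow_two, hu2]⟩
      · exact Subgroup.mem_zpowers u
      · exact ⟨3, by show u ^ (3:ℤ) = -u; rw [show (3 : ℤ) = 2 + 1 from rfl, zpow_add, zpow_two, zpow_one, hu2,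
          neg_one_mul]⟩
    · haveI : Fact (Nat.Prime 2) := ⟨Nat.prime_two⟩
      have h4 : orderOf u = 2 ^ 2 := by
        refine orderOf_eq_prime_pow ?_ ?_
        · rw [pow_one, pow_two, hu2]
          exact fun hh => n1 hh.symm
        · rw [show (2 : ℕ) ^ 2 = 2 * 2 from rfl, pow_mul, pow_two u, hu2, neg_one_sq]
      rw [h4]
      norm_num
  · intro heven
    rw [hsq, hsdef, heven.neg_one_pow, one_smul]
end

/-- For `n ≥ 1`, `ℰ ∉ {1, −1}`, and `{1, −1, ℰ, −ℰ}` is a subgroup of order 4 of the group of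
units of the Clifford algebra; it is cyclic of order 4 generated by `ℰ` when `n` is odd, and is
the Klein group `ℤ/2 × ℤ/2` (i.e. `ℰ² = 1` and `ℰ ≠ ±1`) when `n` is even. -/
theorem cliffordCenterE_subgroup {V : Type*} [AddCommGroup V] [Module ℂ V]
    (Q : QuadraticForm ℂ V) {n : ℕ} (hn : 1 ≤ n) (e f : Fin n → V)
    (h : IsHyperbolicBasis Q e f) :
    cliffordCenterE Q e f ≠ 1 ∧ cliffordCenterE Q e f ≠ -1 ∧
      ∃ u : (CliffordAlgebra Q)ˣ, (u : CliffordAlgebra Q) = cliffordCenterE Q e f ∧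
        ∃ H : Subgroup (CliffordAlgebra Q)ˣ,
          ((↑) '' (H : Set (CliffordAlgebra Q)ˣ) : Set (CliffordAlgebra Q)) =
            {1, -1, cliffordCenterE Q e f, -cliffordCenterE Q e f} ∧
          Nat.card H = 4 ∧
          (Odd n → H = Subgroup.zpowers u ∧ orderOf u = 4) ∧
          (Even n → cliffordCenterE Q e f * cliffordCenterE Q e f = 1) := by
  exact cliffordCenterE_subgroup' Q hn e f h
end

section
/- Let (e_1, …, e_k; f_1, …, f_k) be a hyperbolic family in the complex quadratic space (V, Q) and let u ∈ V satisfy Q(u) = 1 and polar(Q)(u, e_j) = polar(Q)(u, f_j) = 0 for all j. Set ℰ_B = i^k · ι(u) · ∏_{j=1}^k (1 − ι(e_j)ι(f_j)) in C(V,Q). Then: (a) ℰ_B² = (−1)^k · 1; (b) ℰ_B · reverse(ℰ_B) = 1, where reverse is the anti-automorphism of C(V,Q) reversing products of vectors; (c) ℰ_B commutes with ι(v) for every v in the span of {e_1, …, e_k, f_1, …, f_k, u}; (d) ℰ_B · ι(w) = −ι(w) · ℰ_B for every w ∈ V with polar(Q)(w, e_j) = polar(Q)(w, f_j) = polar(Q)(w,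 u) = 0 for all j. (Thus the twisted conjugation action of ℰ_B on V is −Id on the (2k+1)-dimensional block and +Id on its orthogonal complement.) -/
open CliffordAlgebra

/-- The element `ℰ_B = i^k · ι(u) · ∏ⱼ (1 − ι(eⱼ)ι(fⱼ))` attached to an odd block. -/
noncomputable def oddBlockE {V : Type*} [AddCommGroup V] [Module ℂ V]
    (Q : QuadraticForm ℂ V) {k : ℕ} (e f : Fin k → V) (u : V) : CliffordAlgebra Q :=
  Complex.I ^ k •
    (ι Q u * (List.ofFn fun j => (1 : CliffordAlgebra Q) - ι Q (e j) * ι Q (f j)).prod)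

namespace CliffordHelper

variable {V : Type*} [AddCommGroup V] [Module ℂ V] {Q : QuadraticForm ℂ V}

lemma anticomm_of_polar {x y : V} (h : QuadraticMap.polar (⇑Q) x y = 0) :
    ι Q x * ι Q y = -(ι Q y * ι Q x) := by
  have h2 := CliffordAlgebra.ι_mul_ι_add_swap (Q := Q) x y
  rw [h, map_zero] at h2
  exact eq_neg_of_add_eq_zero_left h2

lemma comm_mul {w x y : V} (hx : QuadraticMap.polar (⇑Q) w x = 0)
    (hy : QuadraticMap.polar (⇑Q) w y = 0) :
    Commute (ι Q w) (ι Q x * ι Q y) := by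
  have h1 := anticomm_of_polar hx
  have h2 := anticomm_of_polar hy
  show ι Q w * (ι Q x * ι Q y) = (ι Q x * ι Q y) * ι Q w
  rw [← mul_assoc, h1, neg_mul, mul_assoc, h2, mul_neg, neg_neg, mul_assoc]

lemma commute_factor {w x y : V} (hx : QuadraticMap.polar (⇑Q) w x = 0)
    (hy : QuadraticMap.polar (⇑Q) w y = 0) :
    Commute (ι Q w) (1 - ι Q x * ι Q y) :=
  (Commute.one_right _).sub_right (comm_mul hx hy)

lemma commute_factor' {a b x y : V}
    (hax : QuadraticMap.polar (⇑Q) a x = 0) (hay : QuadraticMap.polar (⇑Q) a y = 0)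
    (hbx : QuadraticMap.polar (⇑Q) b x = 0) (hby : QuadraticMap.polar (⇑Q) b y = 0) :
    Commute (ι Q a * ι Q b) (1 - ι Q x * ι Q y) :=
  (Commute.one_right _).sub_right ((comm_mul hax hay).mul_left (comm_mul hbx hby))

section G

variable {x y : V}

lemma isq (hx : Q x = 0) : ι Q x * ι Q x = 0 := by
  rw [ι_sq_scalar, hx, map_zero]

lemma yx_eq (hxy : QuadraticMap.polar (⇑Q) x y = 2) :
    ι Q y * ι Q x = 2 - ι Q x * ι Q y := by
  have h := CliffordAlgebra.ι_mul_ι_add_swap (Q := Q) y x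
  rw [QuadraticMap.polar_comm, hxy, map_ofNat] at h
  exact eq_sub_of_add_eq h

lemma G_mul_x (hx : Q x = 0) (hxy : QuadraticMap.polar (⇑Q) x y = 2) :
    (1 - ι Q x * ι Q y) * ι Q x = -(ι Q x) := by
  rw [sub_mul, one_mul, mul_assoc, yx_eq hxy, mul_sub, ← mul_assoc, isq hx]
  noncomm_ring

lemma x_mul_G (hx : Q x = 0) :
    ι Q x * (1 - ι Q x * ι Q y) = ι Q x := by
  rw [mul_sub, mul_one, ← mul_assoc, isq hx]
  noncomm_ring

lemma G_mul_y (hy : Q y = 0) :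
    (1 - ι Q x * ι Q y) * ι Q y = ι Q y := by
  rw [sub_mul, one_mul, mul_assoc, isq hy]
  noncomm_ring

lemma y_mul_G (hy : Q y = 0) (hxy : QuadraticMap.polar (⇑Q) x y = 2) :
    ι Q y * (1 - ι Q x * ι Q y) = -(ι Q y) := by
  rw [mul_sub, mul_one, ← mul_assoc, yx_eq hxy, sub_mul, mul_assoc, isq hy]
  noncomm_ring

lemma G_sq (hx : Q x = 0) (hy : Q y = 0) (hxy : QuadraticMap.polar (⇑Q) x y = 2) :
    (1 - ι Q x * ι Q y) * (1 - ι Q x * ι Q y) = 1 := by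
  have h : (1 - ι Q x * ι Q y) * (1 - ι Q x * ι Q y)
      = (1 - ι Q x * ι Q y) - ((1 - ι Q x * ι Q y) * ι Q x) * ι Q y := by
    noncomm_ring
  rw [h, G_mul_x hx hxy]
  noncomm_ring

lemma rev_G (hxy : QuadraticMap.polar (⇑Q) x y = 2) :
    reverse (Q := Q) (1 - ι Q x * ι Q y) = -(1 - ι Q x * ι Q y) := by
  rw [map_sub, reverse.map_one, reverse.map_mul, reverse_ι, reverse_ι, yx_eq hxy]
  have h2 : (1 : CliffordAlgebra Q) - (2 - ι Q x * ι Q y)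
      = (1 - 2) + ι Q x * ι Q y := by noncomm_ring
  have h3 : (1 : CliffordAlgebra Q) - 2 = -1 := by norm_num
  rw [h2, h3]
  noncomm_ring

end G

/-- The product `∏ⱼ (1 − ι(eⱼ)ι(fⱼ))`. -/
noncomputable def Pfam (Q : QuadraticForm ℂ V) {n : ℕ} (e f : Fin n → V) :
    CliffordAlgebra Q :=
  (List.ofFn fun j => (1 : CliffordAlgebra Q) - ι Q (e j) * ι Q (f j)).prod

lemma Pfam_succ {n : ℕ} (e f : Fin (n + 1) → V) :
    Pfam Q e f = (1 - ι Q (e 0) * ι Q (f 0)) * Pfam Q (e ∘ Fin.succ) (f ∘ Fin.succ) := by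
  simp [Pfam, List.ofFn_succ, Function.comp]

lemma hyp_tail {n : ℕ} {e f : Fin (n + 1) → V} (h : IsHyperbolicFamily Q e f) :
    IsHyperbolicFamily Q (e ∘ Fin.succ) (f ∘ Fin.succ) := by
  obtain ⟨h1, h2, h3, h4, h5⟩ := h
  exact ⟨fun j => h1 _, fun j => h2 _,
    fun i j => by simpa [Fin.succ_inj] using h3 i.succ j.succ,
    fun i j => h4 _ _, fun i j => h5 _ _⟩

lemma hef00 {n : ℕ} {e f : Fin (n + 1) → V} (h : IsHyperbolicFamily Q e f) :
    QuadraticMap.polar (⇑Q) (e 0) (f 0) = 2 := by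
  simpa using h.2.2.1 0 0

lemma ortho0 {n : ℕ} {e f : Fin (n + 1) → V} (h : IsHyperbolicFamily Q e f) :
    (∀ j, QuadraticMap.polar (⇑Q) (e 0) ((e ∘ Fin.succ) j) = 0) ∧
    (∀ j, QuadraticMap.polar (⇑Q) (e 0) ((f ∘ Fin.succ) j) = 0) ∧
    (∀ j, QuadraticMap.polar (⇑Q) (f 0) ((e ∘ Fin.succ) j) = 0) ∧
    (∀ j, QuadraticMap.polar (⇑Q) (f 0) ((f ∘ Fin.succ) j) = 0) := by
  obtain ⟨h1, h2, h3, h4, h5⟩ := h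
  refine ⟨fun j => h4 0 j.succ, fun j => ?_, fun j => ?_, fun j => h5 0 j.succ⟩
  · simpa [(Fin.succ_ne_zero j).symm] using h3 0 j.succ
  · rw [Function.comp_apply, QuadraticMap.polar_comm]
    simpa [Fin.succ_ne_zero j] using h3 j.succ 0

lemma comm_ι_Pfam {n : ℕ} {e f : Fin n → V} {w : V}
    (he : ∀ j, QuadraticMap.polar (⇑Q) w (e j) = 0)
    (hf : ∀ j, QuadraticMap.polar (⇑Q) w (f j) = 0) :
    Commute (ι Q w) (Pfam Q e f) := by
  apply Commute.list_prod_right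
  intro z hz
  rw [List.mem_ofFn] at hz
  obtain ⟨j, rfl⟩ := hz
  exact commute_factor (he j) (hf j)

lemma comm_G_Pfam {n : ℕ} {e f : Fin n → V} {a b : V}
    (hae : ∀ j, QuadraticMap.polar (⇑Q) a (e j) = 0)
    (haf : ∀ j, QuadraticMap.polar (⇑Q) a (f j) = 0)
    (hbe : ∀ j, QuadraticMap.polar (⇑Q) b (e j) = 0)
    (hbf : ∀ j, QuadraticMap.polar (⇑Q) b (f j) = 0) :
    Commute (1 - ι Q a * ι Q b) (Pfam Q e f) := by
  apply Commute.list_prod_right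
  intro z hz
  rw [List.mem_ofFn] at hz
  obtain ⟨j, rfl⟩ := hz
  exact (Commute.one_left _).sub_left (commute_factor' (hae j) (haf j) (hbe j) (hbf j))

lemma Pfam_sq : ∀ {n : ℕ} {e f : Fin n → V}, IsHyperbolicFamily Q e f →
    Pfam Q e f * Pfam Q e f = 1
  | 0, e, f, _ => by simp [Pfam]
  | (n + 1), e, f, h => by
    have ht := hyp_tail h
    have ho := ortho0 h
    have hcomm : Commute (1 - ι Q (e 0) * ι Q (f 0))
        (Pfam Q (e ∘ Fin.succ) (f ∘ Fin.succ)) :=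
      comm_G_Pfam ho.1 ho.2.1 ho.2.2.1 ho.2.2.2
    have hGsq := G_sq (h.1 0) (h.2.1 0) (hef00 h)
    rw [Pfam_succ]
    set G := (1 : CliffordAlgebra Q) - ι Q (e 0) * ι Q (f 0) with hG
    set P' := Pfam Q (e ∘ Fin.succ) (f ∘ Fin.succ) with hP'
    calc G * P' * (G * P') = G * ((P' * G) * P') := by noncomm_ring
      _ = G * ((G * P') * P') := by rw [← hcomm.eq]
      _ = (G * G) * (P' * P') := by noncomm_ring
      _ = 1 := by rw [hGsq, Pfam_sq ht, one_mul]

lemma Pfam_rev : ∀ {n : ℕ} {e f : Fin n → V}, IsHyperbolicFamily Q e f →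
    reverse (Q := Q) (Pfam Q e f) = ((-1 : ℂ) ^ n) • Pfam Q e f
  | 0, e, f, _ => by simp [Pfam, reverse.map_one]
  | (n + 1), e, f, h => by
    have ht := hyp_tail h
    have ho := ortho0 h
    have hcomm : Commute (1 - ι Q (e 0) * ι Q (f 0))
        (Pfam Q (e ∘ Fin.succ) (f ∘ Fin.succ)) :=
      comm_G_Pfam ho.1 ho.2.1 ho.2.2.1 ho.2.2.2
    rw [Pfam_succ, reverse.map_mul, rev_G (hef00 h), Pfam_rev ht]
    rw [smul_mul_assoc, mul_neg, smul_neg, ← neg_smul, ← hcomm.eq, pow_succ, mul_neg_one]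

lemma Pfam_mul_e : ∀ {n : ℕ} {e f : Fin n → V}, IsHyperbolicFamily Q e f →
    ∀ j, Pfam Q e f * ι Q (e j) = -(ι Q (e j) * Pfam Q e f)
  | 0, _, _, _, j => j.elim0
  | (n + 1), e, f, h, j => by
    have ht := hyp_tail h
    have ho := ortho0 h
    rw [Pfam_succ]
    set G := (1 : CliffordAlgebra Q) - ι Q (e 0) * ι Q (f 0) with hG
    set P' := Pfam Q (e ∘ Fin.succ) (f ∘ Fin.succ) with hP'
    refine Fin.cases ?_ (fun i => ?_) j
    · have hP'e0 : Commute (ι Q (e 0)) P' := comm_ι_Pfam ho.1 ho.2.1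
      have hGe0 : G * ι Q (e 0) = -(ι Q (e 0) * G) := by
        rw [hG, G_mul_x (h.1 0) (hef00 h), x_mul_G (h.1 0)]
      calc G * P' * ι Q (e 0) = G * (P' * ι Q (e 0)) := by rw [mul_assoc]
        _ = G * (ι Q (e 0) * P') := by rw [← hP'e0.eq]
        _ = (G * ι Q (e 0)) * P' := by rw [mul_assoc]
        _ = -(ι Q (e 0) * G) * P' := by rw [hGe0]
        _ = -(ι Q (e 0) * (G * P')) := by noncomm_ring
    · have hIH := Pfam_mul_e ht i
      simp only [Function.comp_apply] at hIH
      have hGes : Commute (ι Q (e i.succ)) G := by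
        rw [hG]
        refine commute_factor (h.2.2.2.1 i.succ 0) ?_
        simpa [Fin.succ_ne_zero i] using h.2.2.1 i.succ 0
      calc G * P' * ι Q (e i.succ) = G * (P' * ι Q (e i.succ)) := by rw [mul_assoc]
        _ = G * (-(ι Q (e i.succ) * P')) := by rw [hIH]
        _ = -((G * ι Q (e i.succ)) * P') := by noncomm_ring
        _ = -((ι Q (e i.succ) * G) * P') := by rw [hGes.eq]
        _ = -(ι Q (e i.succ) * (G * P')) := by rw [mul_assoc]

lemma Pfam_mul_f : ∀ {n : ℕ} {e f : Fin n → V}, IsHyperbolicFamily Q e f →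
    ∀ j, Pfam Q e f * ι Q (f j) = -(ι Q (f j) * Pfam Q e f)
  | 0, _, _, _, j => j.elim0
  | (n + 1), e, f, h, j => by
    have ht := hyp_tail h
    have ho := ortho0 h
    rw [Pfam_succ]
    set G := (1 : CliffordAlgebra Q) - ι Q (e 0) * ι Q (f 0) with hG
    set P' := Pfam Q (e ∘ Fin.succ) (f ∘ Fin.succ) with hP'
    refine Fin.cases ?_ (fun i => ?_) j
    · have hP'f0 : Commute (ι Q (f 0)) P' := comm_ι_Pfam ho.2.2.1 ho.2.2.2
      have hGf0 : G * ι Q (f 0) = -(ι Q (f 0) * G) := by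
        rw [hG, G_mul_y (h.2.1 0), y_mul_G (h.2.1 0) (hef00 h), neg_neg]
      calc G * P' * ι Q (f 0) = G * (P' * ι Q (f 0)) := by rw [mul_assoc]
        _ = G * (ι Q (f 0) * P') := by rw [← hP'f0.eq]
        _ = (G * ι Q (f 0)) * P' := by rw [mul_assoc]
        _ = -(ι Q (f 0) * G) * P' := by rw [hGf0]
        _ = -(ι Q (f 0) * (G * P')) := by noncomm_ring
    · have hIH := Pfam_mul_f ht i
      simp only [Function.comp_apply] at hIH
      have hGfs : Commute (ι Q (f i.succ)) G := by
        rw [hG]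
        refine commute_factor ?_ (h.2.2.2.2 i.succ 0)
        rw [QuadraticMap.polar_comm]
        simpa [(Fin.succ_ne_zero i).symm] using h.2.2.1 0 i.succ
      calc G * P' * ι Q (f i.succ) = G * (P' * ι Q (f i.succ)) := by rw [mul_assoc]
        _ = G * (-(ι Q (f i.succ) * P')) := by rw [hIH]
        _ = -((G * ι Q (f i.succ)) * P') := by noncomm_ring
        _ = -((ι Q (f i.succ) * G) * P') := by rw [hGfs.eq]
        _ = -(ι Q (f i.succ) * (G * P')) := by rw [mul_assoc]

lemma comm_of_anti {R : Type*} [Ring R] {a b x : R}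
    (h1 : a * x = -(x * a)) (h2 : b * x = -(x * b)) :
    (a * b) * x = x * (a * b) := by
  calc a * b * x = a * (b * x) := by rw [mul_assoc]
    _ = a * (-(x * b)) := by rw [h2]
    _ = (-(a * x)) * b := by noncomm_ring
    _ = (-(-(x * a))) * b := by rw [h1]
    _ = x * (a * b) := by noncomm_ring

lemma anti_of_mix {R : Type*} [Ring R] {a b x : R}
    (h1 : a * x = -(x * a)) (h2 : b * x = x * b) :
    (a * b) * x = -(x * (a * b)) := by
  calc a * b * x = a * (b * x) := by rw [mul_assoc]
    _ = a * (x * b) := by rw [h2]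
    _ = (a * x) * b := by rw [mul_assoc]
    _ = (-(x * a)) * b := by rw [h1]
    _ = -(x * (a * b)) := by noncomm_ring

end CliffordHelper

open CliffordHelper in
/-- `ℰ_B² = (−1)^k`, `ℰ_B · reverse(ℰ_B) = 1`, `ℰ_B` commutes with vectors of the
`(2k+1)`-dimensional block and anticommutes with vectors orthogonal to the block. -/
theorem oddBlockE_properties {V : Type*} [AddCommGroup V] [Module ℂ V]
    (Q : QuadraticForm ℂ V) {k : ℕ} (e f : Fin k → V) (u : V)
    (hef : IsHyperbolicFamily Q e f) (hu : Q u = 1)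
    (hue : ∀ j, QuadraticMap.polar (⇑Q) u (e j) = 0)
    (huf : ∀ j, QuadraticMap.polar (⇑Q) u (f j) = 0) :
    oddBlockE Q e f u * oddBlockE Q e f u = ((-1 : ℂ) ^ k) • (1 : CliffordAlgebra Q) ∧
    oddBlockE Q e f u * reverse (Q := Q) (oddBlockE Q e f u) = 1 ∧
    (∀ v ∈ Submodule.span ℂ (Set.range e ∪ Set.range f ∪ {u}),
      oddBlockE Q e f u * ι Q v = ι Q v * oddBlockE Q e f u) ∧
    (∀ w : V, (∀ j, QuadraticMap.polar (⇑Q) w (e j) = 0) →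
      (∀ j, QuadraticMap.polar (⇑Q) w (f j) = 0) →
      QuadraticMap.polar (⇑Q) w u = 0 →
      oddBlockE Q e f u * ι Q w = -(ι Q w * oddBlockE Q e f u)) := by
  have hE : oddBlockE Q e f u = Complex.I ^ k • (ι Q u * Pfam Q e f) := rfl
  set P := Pfam Q e f with hP
  have hUP : Commute (ι Q u) P := comm_ι_Pfam hue huf
  have hPP : P * P = 1 := Pfam_sq hef
  have hu2 : ι Q u * ι Q u = 1 := by rw [ι_sq_scalar, hu, map_one]
  have hscal : Complex.I ^ k * Complex.I ^ k * (-1 : ℂ) ^ k = 1 := by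
    rw [← mul_pow, Complex.I_mul_I, ← mul_pow, neg_mul_neg, one_mul, one_pow]
  have hE0sq : (ι Q u * P) * (ι Q u * P) = 1 := by
    calc (ι Q u * P) * (ι Q u * P) = ι Q u * (P * ι Q u) * P := by noncomm_ring
      _ = ι Q u * (ι Q u * P) * P := by rw [← hUP.eq]
      _ = (ι Q u * ι Q u) * (P * P) := by noncomm_ring
      _ = 1 := by rw [hu2, hPP, one_mul]
  refine ⟨?_, ?_, ?_, ?_⟩
  · rw [hE, smul_mul_assoc, mul_smul_comm, smul_smul, hE0sq]
    congr 1
    rw [← mul_pow, Complex.I_mul_I]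
  · have hmid : (ι Q u * P) * (P * ι Q u) = 1 := by
      calc (ι Q u * P) * (P * ι Q u) = ι Q u * ((P * P) * ι Q u) := by noncomm_ring
        _ = 1 := by rw [hPP, one_mul, hu2]
    rw [hE, map_smul, reverse.map_mul, reverse_ι, Pfam_rev hef, ← hP]
    rw [smul_mul_assoc, smul_mul_assoc, mul_smul_comm, mul_smul_comm, smul_smul,
      smul_smul, hmid, hscal, one_smul]
  · have key : ∀ v : V, (ι Q u * P) * ι Q v = ι Q v * (ι Q u * P) →
        oddBlockE Q e f u * ι Q v = ι Q v * oddBlockE Q e f u := by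
      intro v hv
      rw [hE, smul_mul_assoc, hv, mul_smul_comm]
    intro v hv
    induction hv using Submodule.span_induction with
    | mem x hx =>
      simp only [Set.mem_union, Set.mem_range, Set.mem_singleton_iff] at hx
      rcases hx with (⟨j, rfl⟩ | ⟨j, rfl⟩) | rfl
      · exact key _ (comm_of_anti (anticomm_of_polar (hue j)) (Pfam_mul_e hef j))
      · exact key _ (comm_of_anti (anticomm_of_polar (huf j)) (Pfam_mul_f hef j))
      · refine key _ ?_
        rw [mul_assoc, ← hUP.eq, ← mul_assoc]
    | zero => simp
    | add x y hx hy ihx ihy => rw [map_add, mul_add, add_mul, ihx, ihy]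
    | smul c x hx ih => rw [map_smul, mul_smul_comm, smul_mul_assoc, ih]
  · intro w hwe hwf hwu
    have hwP : Commute (ι Q w) P := comm_ι_Pfam hwe hwf
    have huw : ι Q u * ι Q w = -(ι Q w * ι Q u) :=
      anticomm_of_polar (by rwa [QuadraticMap.polar_comm])
    have hanti : (ι Q u * P) * ι Q w = -(ι Q w * (ι Q u * P)) :=
      anti_of_mix huw hwP.symm.eq
    rw [hE, smul_mul_assoc, hanti, smul_neg, mul_smul_comm]
end

section
/- Let (e_1, …, e_k; f_1, …, f_k) and (e′_1, …, e′_ℓ; f′_1, …, f′_ℓ) be hyperbolic families in the complex quadratic space (V, Q), and let u, u′ ∈ V satisfy Q(u) = Q(u′) = 1, with all vectors from the first block {e_j, f_j, u} orthogonal (i.e., polar(Q) = 0) to all vectors from the second block {e′_j, f′_j, u′}, and u (resp. u′) orthogonal to all e_j, f_j (resp. all e′_j, f′_j). Set ℰ = i^k · ι(u) · ∏_{j=1}^k (1 − ι(e_j)ι(f_j)) and ℰ′ = i^ℓ · ι(u′) · ∏_{j=1}^ℓ (1 − ι(e′_j)ι(f′_j)) in C(V,Q). Then ℰ · ℰ′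 = −ℰ′ · ℰ. -/
open CliffordAlgebra

section
variable {V : Type*} [AddCommGroup V] [Module ℂ V] (Q : QuadraticForm ℂ V)

lemma my_anticomm {a b : V} (h : QuadraticMap.polar (⇑Q) a b = 0) :
    ι Q a * ι Q b = -(ι Q b * ι Q a) := by
  have := ι_mul_ι_add_swap (Q := Q) a b
  rw [h, map_zero] at this
  exact eq_neg_of_add_eq_zero_left this

lemma my_commute_factor {v a b : V} (ha : QuadraticMap.polar (⇑Q) v a = 0)
    (hb : QuadraticMap.polar (⇑Q) v b = 0) :
    Commute (ι Q v) (1 - ι Q a * ι Q b) := by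
  refine (Commute.one_right _).sub_right ?_
  show ι Q v * (ι Q a * ι Q b) = (ι Q a * ι Q b) * ι Q v
  rw [← mul_assoc, my_anticomm Q ha, neg_mul, mul_assoc, my_anticomm Q hb, mul_neg, neg_neg,
    mul_assoc]

lemma my_commute_prod {n : ℕ} (e f : Fin n → V) (v : V)
    (ha : ∀ j, QuadraticMap.polar (⇑Q) v (e j) = 0)
    (hb : ∀ j, QuadraticMap.polar (⇑Q) v (f j) = 0) :
    Commute (ι Q v)
      ((List.ofFn fun j => (1 : CliffordAlgebra Q) - ι Q (e j) * ι Q (f j)).prod) := by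
  apply Commute.list_prod_right
  intro x hx
  obtain ⟨j, rfl⟩ := List.mem_ofFn.mp hx
  exact my_commute_factor Q (ha j) (hb j)

end


/-- The elements `ℰ`, `ℰ′` attached to two mutually orthogonal odd blocks anticommute. -/
theorem oddBlockE_anticommute {V : Type*} [AddCommGroup V] [Module ℂ V]
    (Q : QuadraticForm ℂ V) {k l : ℕ} (e f : Fin k → V) (e' f' : Fin l → V) (u u' : V)
    (hef : IsHyperbolicFamily Q e f) (hef' : IsHyperbolicFamily Q e' f')
    (hu : Q u = 1) (hu' : Q u' = 1)
    (hue : ∀ j, QuadraticMap.polar (⇑Q) u (e j) = 0)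
    (huf : ∀ j, QuadraticMap.polar (⇑Q) u (f j) = 0)
    (hue' : ∀ j, QuadraticMap.polar (⇑Q) u' (e' j) = 0)
    (huf' : ∀ j, QuadraticMap.polar (⇑Q) u' (f' j) = 0)
    (hee : ∀ i j, QuadraticMap.polar (⇑Q) (e i) (e' j) = 0)
    (hef'2 : ∀ i j, QuadraticMap.polar (⇑Q) (e i) (f' j) = 0)
    (hfe : ∀ i j, QuadraticMap.polar (⇑Q) (f i) (e' j) = 0)
    (hff : ∀ i j, QuadraticMap.polar (⇑Q) (f i) (f' j) = 0)
    (heu' : ∀ i, QuadraticMap.polar (⇑Q) (e i) u' = 0)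
    (hfu' : ∀ i, QuadraticMap.polar (⇑Q) (f i) u' = 0)
    (hue'' : ∀ j, QuadraticMap.polar (⇑Q) u (e' j) = 0)
    (huf'' : ∀ j, QuadraticMap.polar (⇑Q) u (f' j) = 0)
    (huu' : QuadraticMap.polar (⇑Q) u u' = 0) :
    oddBlockE Q e f u * oddBlockE Q e' f' u' = -(oddBlockE Q e' f' u' * oddBlockE Q e f u) := by
  simp only [oddBlockE]
  set P : CliffordAlgebra Q :=
    (List.ofFn fun j => (1 : CliffordAlgebra Q) - ι Q (e j) * ι Q (f j)).prod with hP
  set P' : CliffordAlgebra Q :=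
    (List.ofFn fun j => (1 : CliffordAlgebra Q) - ι Q (e' j) * ι Q (f' j)).prod with hP'
  -- P commutes with ι u'
  have hPu' : Commute P (ι Q u') :=
    (my_commute_prod Q e f u' (fun j => by rw [QuadraticMap.polar_comm]; exact heu' j)
      (fun j => by rw [QuadraticMap.polar_comm]; exact hfu' j)).symm
  have hP'u : Commute P' (ι Q u) :=
    (my_commute_prod Q e' f' u (fun j => hue'' j) (fun j => huf'' j)).symm
  have hPP' : Commute P P' := by
    apply Commute.list_prod_right
    intro x hx
    obtain ⟨j, rfl⟩ := List.mem_ofFn.mp hx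
    refine (Commute.one_right _).sub_right ?_
    exact ((my_commute_prod Q e f (e' j)
        (fun i => by rw [QuadraticMap.polar_comm]; exact hee i j)
        (fun i => by rw [QuadraticMap.polar_comm]; exact hfe i j)).symm).mul_right
      ((my_commute_prod Q e f (f' j)
        (fun i => by rw [QuadraticMap.polar_comm]; exact hef'2 i j)
        (fun i => by rw [QuadraticMap.polar_comm]; exact hff i j)).symm)
  have huu : ι Q u * ι Q u' = -(ι Q u' * ι Q u) := my_anticomm Q huu'
  have key : (ι Q u * P) * (ι Q u' * P') = -((ι Q u' * P') * (ι Q u * P)) := by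
    rw [mul_assoc, hPu'.left_comm, ← mul_assoc, huu, neg_mul, mul_assoc, hPP'.eq,
      mul_assoc, hP'u.left_comm, ← mul_assoc]

  rw [smul_mul_assoc, mul_smul_comm, smul_smul, key, smul_neg, smul_mul_assoc,
    mul_smul_comm, smul_smul, mul_comm (Complex.I ^ k)]
end

section
/- Let (e_1, e_2; f_1, f_2) be a hyperbolic family in the complex quadratic space (V, Q). In C(V,Q) set z = (i·(1 − ι(e_1)ι(f_1))) · (i·(1 − ι(e_2)ι(f_2))) and x = ι(e_2 + f_2) · ι(f_1). Then: (a) z ∈ spinGroup Q; (b) z² = 1; (c) z·x = x·z; (d) z·ι(v) = −ι(v)·z for each v ∈ {e_1, f_1, e_2, f_2}, so conjugation by z negates ι(v) on the span of {e_1, f_1, e_2, f_2}; (e) z·ι(w) = ι(w)·z for every w ∈ V orthogonal (polar(Q) = 0) to each of e_1, f_1, e_2, f_2. (This element is an order-two element of the spin group centralizing the nilpotent x, representing a nontrivial component of the centralizer.) -/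
open CliffordAlgebra

section Aux
variable {A : Type*} [Ring A]

lemma aux_hba {a b : A} (hab : a * b + b * a = 2) : b * a = 2 - a * b :=
  eq_sub_of_add_eq' hab

lemma aux_sq {a b : A} (ha : a * a = 0) (hb : b * b = 0) (hab : a * b + b * a = 2) :
    (1 - a * b) * (1 - a * b) = 1 := by
  have hba := aux_hba hab
  have h1 : a * b * (a * b) = 2 * (a * b) := by
    calc a * b * (a * b) = a * (b * a) * b := by noncomm_ring
    _ = a * (2 - a * b) * b := by rw [hba]
    _ = 2 * (a * b) - a * a * (b * b) := by noncomm_ring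
    _ = 2 * (a * b) := by rw [ha, zero_mul, sub_zero]
  calc (1 - a * b) * (1 - a * b) = 1 - 2 * (a * b) + a * b * (a * b) := by noncomm_ring
  _ = 1 := by rw [h1]; abel

lemma aux_anticomm_a {a b : A} (ha : a * a = 0) (hab : a * b + b * a = 2) :
    (1 - a * b) * a = -(a * (1 - a * b)) := by
  have hba := aux_hba hab
  have h1 : a * b * a = 2 * a := by
    calc a * b * a = a * (b * a) := by noncomm_ring
    _ = a * (2 - a * b) := by rw [hba]
    _ = 2 * a - a * a * b := by noncomm_ring
    _ = 2 * a := by rw [ha, zero_mul, sub_zero]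
  have h2 : a * (1 - a * b) = a := by
    rw [mul_sub, mul_one, ← mul_assoc, ha, zero_mul, sub_zero]
  rw [h2, sub_mul, one_mul, h1]
  noncomm_ring

lemma aux_anticomm_b {a b : A} (hb : b * b = 0) (hab : a * b + b * a = 2) :
    (1 - a * b) * b = -(b * (1 - a * b)) := by
  have hba := aux_hba hab
  have h1 : (1 - a * b) * b = b := by
    rw [sub_mul, one_mul, mul_assoc, hb, mul_zero, sub_zero]
  have h2 : b * (1 - a * b) = -b := by
    calc b * (1 - a * b) = b - (b * a) * b := by noncomm_ring
    _ = b - (2 - a * b) * b := by rw [hba]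
    _ = a * (b * b) - b := by noncomm_ring
    _ = -b := by rw [hb, mul_zero, zero_sub]
  rw [h1, h2, neg_neg]

lemma aux_comm {g a b : A} (hga : g * a = -(a * g)) (hgb : g * b = -(b * g)) :
    g * (a * b) = (a * b) * g := by
  calc g * (a * b) = (g * a) * b := by rw [mul_assoc]
  _ = -(a * (g * b)) := by rw [hga]; noncomm_ring
  _ = a * (b * g) := by rw [hgb, mul_neg, neg_neg]
  _ = (a * b) * g := by rw [mul_assoc]

lemma aux_comm_mul {g a b : A} (hga : g * a = a * g) (hgb : g * b = b * g) :
    g * (a * b) = (a * b) * g := by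
  rw [← mul_assoc, hga, mul_assoc, hgb, ← mul_assoc]

lemma aux_comm_one_sub {g x : A} (h : g * x = x * g) : g * (1 - x) = (1 - x) * g := by
  rw [mul_sub, sub_mul, mul_one, one_mul, h]

/-- `p` anticommutes, `q` commutes. -/
lemma aux_pq_anti1 {p q x : A} (h1 : p * x = -(x * p)) (h2 : q * x = x * q) :
    (p * q) * x = -(x * (p * q)) := by
  calc (p * q) * x = p * (q * x) := by rw [mul_assoc]
  _ = (p * x) * q := by rw [h2, mul_assoc]
  _ = -(x * p) * q := by rw [h1]
  _ = -(x * (p * q)) := by noncomm_ring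

/-- `p` commutes, `q` anticommutes. -/
lemma aux_pq_anti2 {p q x : A} (h1 : p * x = x * p) (h2 : q * x = -(x * q)) :
    (p * q) * x = -(x * (p * q)) := by
  calc (p * q) * x = p * (q * x) := by rw [mul_assoc]
  _ = -(p * (x * q)) := by rw [h2, mul_neg]
  _ = -((x * p) * q) := by rw [← mul_assoc, h1]
  _ = -(x * (p * q)) := by rw [mul_assoc]

lemma ι_mem_lipschitz_coe {V : Type*} [AddCommGroup V] [Module ℂ V] (Q : QuadraticForm ℂ V)
    (w : V) (h : Q w ≠ 0) :
    ι Q w ∈ (lipschitzGroup Q).toSubmonoid.map (Units.coeHom (CliffordAlgebra Q)) := by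
  have hu : IsUnit (ι Q w) := isUnit_ι_of_isUnit Q (isUnit_iff_ne_zero.mpr h)
  exact ⟨hu.unit, Subgroup.subset_closure ⟨w, hu.unit_spec.symm⟩, hu.unit_spec⟩

end Aux

/-- The order-two element `z = (i(1 − ι(e₁)ι(f₁)))·(i(1 − ι(e₂)ι(f₂)))` of the spin group
centralizes the nilpotent `x = ι(e₂ + f₂)·ι(f₁)`, negates vectors in the span of
`{e₁, f₁, e₂, f₂}` under conjugation, and commutes with vectors orthogonal to them. -/
theorem order_two_spin_element {V : Type*} [AddCommGroup V] [Module ℂ V]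
    (Q : QuadraticForm ℂ V) (e f : Fin 2 → V)
    (hef : IsHyperbolicFamily Q e f) :
    (Complex.I • ((1 : CliffordAlgebra Q) - ι Q (e 0) * ι Q (f 0))) *
        (Complex.I • ((1 : CliffordAlgebra Q) - ι Q (e 1) * ι Q (f 1))) ∈ spinGroup Q ∧
    ((Complex.I • ((1 : CliffordAlgebra Q) - ι Q (e 0) * ι Q (f 0))) *
          (Complex.I • ((1 : CliffordAlgebra Q) - ι Q (e 1) * ι Q (f 1)))) *
        ((Complex.I • ((1 : CliffordAlgebra Q) - ι Q (e 0) * ι Q (f 0))) *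
          (Complex.I • ((1 : CliffordAlgebra Q) - ι Q (e 1) * ι Q (f 1)))) = 1 ∧
    ((Complex.I • ((1 : CliffordAlgebra Q) - ι Q (e 0) * ι Q (f 0))) *
          (Complex.I • ((1 : CliffordAlgebra Q) - ι Q (e 1) * ι Q (f 1)))) *
        (ι Q (e 1 + f 1) * ι Q (f 0)) =
      (ι Q (e 1 + f 1) * ι Q (f 0)) *
        ((Complex.I • ((1 : CliffordAlgebra Q) - ι Q (e 0) * ι Q (f 0))) *
          (Complex.I • ((1 : CliffordAlgebra Q) - ι Q (e 1) * ι Q (f 1)))) ∧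
    (∀ v ∈ ({e 0, f 0, e 1, f 1} : Set V),
      ((Complex.I • ((1 : CliffordAlgebra Q) - ι Q (e 0) * ι Q (f 0))) *
            (Complex.I • ((1 : CliffordAlgebra Q) - ι Q (e 1) * ι Q (f 1)))) * ι Q v =
        -(ι Q v * ((Complex.I • ((1 : CliffordAlgebra Q) - ι Q (e 0) * ι Q (f 0))) *
            (Complex.I • ((1 : CliffordAlgebra Q) - ι Q (e 1) * ι Q (f 1)))))) ∧
    (∀ w : V, (∀ v ∈ ({e 0, f 0, e 1, f 1} : Set V), QuadraticMap.polar (⇑Q) w v = 0) →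
      ((Complex.I • ((1 : CliffordAlgebra Q) - ι Q (e 0) * ι Q (f 0))) *
            (Complex.I • ((1 : CliffordAlgebra Q) - ι Q (e 1) * ι Q (f 1)))) * ι Q w =
        ι Q w * ((Complex.I • ((1 : CliffordAlgebra Q) - ι Q (e 0) * ι Q (f 0))) *
            (Complex.I • ((1 : CliffordAlgebra Q) - ι Q (e 1) * ι Q (f 1))))) := by
  obtain ⟨hQe, hQf, hpef, hpee, hpff⟩ := hef
  set a := ι Q (e 0) with ha_def
  set b := ι Q (f 0) with hb_def
  set c := ι Q (e 1) with hc_def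
  set d := ι Q (f 1) with hd_def
  set p := (1 : CliffordAlgebra Q) - a * b with hp_def
  set q := (1 : CliffordAlgebra Q) - c * d with hq_def
  -- square-zero relations
  have haa : a * a = 0 := by rw [ha_def, ι_sq_scalar, hQe 0, map_zero]
  have hbb : b * b = 0 := by rw [hb_def, ι_sq_scalar, hQf 0, map_zero]
  have hcc : c * c = 0 := by rw [hc_def, ι_sq_scalar, hQe 1, map_zero]
  have hdd : d * d = 0 := by rw [hd_def, ι_sq_scalar, hQf 1, map_zero]
  -- hyperbolic pairings
  have hab : a * b + b * a = 2 := by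
    rw [ha_def, hb_def, ι_mul_ι_add_swap, hpef 0 0]
    simp [map_ofNat]
  have hcd : c * d + d * c = 2 := by
    rw [hc_def, hd_def, ι_mul_ι_add_swap, hpef 1 1]
    simp [map_ofNat]
  -- anticommutation between the two hyperbolic pairs
  have anti : ∀ x y : V, QuadraticMap.polar (⇑Q) x y = 0 →
      ι Q x * ι Q y = -(ι Q y * ι Q x) := by
    intro x y hxy
    have h := ι_mul_ι_add_swap (Q := Q) x y
    rw [hxy, map_zero] at h
    exact eq_neg_of_add_eq_zero_left h
  have hac : a * c = -(c * a) := anti _ _ (hpee 0 1)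
  have hca : c * a = -(a * c) := anti _ _ (by rw [QuadraticMap.polar_comm]; exact hpee 0 1)
  have had : a * d = -(d * a) := anti _ _ (by simpa using hpef 0 1)
  have hda : d * a = -(a * d) := anti _ _ (by rw [QuadraticMap.polar_comm]; simpa using hpef 0 1)
  have hbc : b * c = -(c * b) := anti _ _ (by rw [QuadraticMap.polar_comm]; simpa using hpef 1 0)
  have hcb : c * b = -(b * c) := anti _ _ (by simpa using hpef 1 0)
  have hbd : b * d = -(d * b) := anti _ _ (hpff 0 1)
  have hdb : d * b = -(b * d) := anti _ _ (by rw [QuadraticMap.polar_comm]; exact hpff 0 1)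
  -- commutation of p with c, d and q with a, b
  have haq : a * q = q * a := aux_comm_one_sub (aux_comm hac had)
  have hbq : b * q = q * b := aux_comm_one_sub (aux_comm hbc hbd)
  have hcp : c * p = p * c := aux_comm_one_sub (aux_comm hca hcb)
  have hdp : d * p = p * d := aux_comm_one_sub (aux_comm hda hdb)
  have hqp : q * p = p * q := aux_comm_one_sub (aux_comm_mul haq.symm hbq.symm)
  -- anticommutation of p with a, b and q with c, d
  have hpa : p * a = -(a * p) := aux_anticomm_a haa hab
  have hpb : p * b = -(b * p) := aux_anticomm_b hbb hab
  have hqc : q * c = -(c * q) := aux_anticomm_a hcc hcd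
  have hqd : q * d = -(d * q) := aux_anticomm_b hdd hcd
  -- squares
  have hpp : p * p = 1 := aux_sq haa hbb hab
  have hqq : q * q = 1 := aux_sq hcc hdd hcd
  -- the element z
  set z := Complex.I • p * (Complex.I • q) with hz_def
  have hz : z = -(p * q) := by
    rw [hz_def, smul_mul_assoc, mul_smul_comm, smul_smul, Complex.I_mul_I, neg_one_smul]
  -- anticommutation of p*q hence z with each generator
  have hpqa : (p * q) * a = -(a * (p * q)) := aux_pq_anti1 hpa haq.symm
  have hpqb : (p * q) * b = -(b * (p * q)) := aux_pq_anti1 hpb hbq.symm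
  have hpqc : (p * q) * c = -(c * (p * q)) := aux_pq_anti2 hcp.symm hqc
  have hpqd : (p * q) * d = -(d * (p * q)) := aux_pq_anti2 hdp.symm hqd
  have hza : z * a = -(a * z) := by rw [hz, neg_mul, hpqa, neg_neg, mul_neg, neg_neg]
  have hzb : z * b = -(b * z) := by rw [hz, neg_mul, hpqb, neg_neg, mul_neg, neg_neg]
  have hzc : z * c = -(c * z) := by rw [hz, neg_mul, hpqc, neg_neg, mul_neg, neg_neg]
  have hzd : z * d = -(d * z) := by rw [hz, neg_mul, hpqd, neg_neg, mul_neg, neg_neg]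
  -- z squared
  have hzz : z * z = 1 := by
    rw [hz, neg_mul_neg]
    calc p * q * (p * q) = p * (q * p) * q := by noncomm_ring
    _ = p * (p * q) * q := by rw [hqp]
    _ = (p * p) * (q * q) := by noncomm_ring
    _ = 1 := by rw [hpp, hqq, one_mul]
  refine ⟨?_, hzz, ?_, ?_, ?_⟩
  · -- spin group membership
    have hab_even : a * b ∈ even Q := ι_mul_ι_mem_evenOdd_zero Q (e 0) (f 0)
    have hcd_even : c * d ∈ even Q := ι_mul_ι_mem_evenOdd_zero Q (e 1) (f 1)
    have heven : z ∈ even Q := by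
      rw [hz_def]
      exact mul_mem (Subalgebra.smul_mem _ (sub_mem (one_mem _) hab_even) _)
        (Subalgebra.smul_mem _ (sub_mem (one_mem _) hcd_even) _)
    have hstarp : star p = -p := by
      rw [hp_def, ha_def, hb_def, star_sub, star_one, star_mul,
        CliffordAlgebra.star_ι, CliffordAlgebra.star_ι, neg_mul_neg, ← ha_def, ← hb_def,
        aux_hba hab, show (2:CliffordAlgebra Q) = 1 + 1 from one_add_one_eq_two.symm]
      noncomm_ring
    have hstarq : star q = -q := by
      rw [hq_def, hc_def, hd_def, star_sub, star_one, star_mul,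
        CliffordAlgebra.star_ι, CliffordAlgebra.star_ι, neg_mul_neg, ← hc_def, ← hd_def,
        aux_hba hcd, show (2:CliffordAlgebra Q) = 1 + 1 from one_add_one_eq_two.symm]
      noncomm_ring
    have hstarz : star z = z := by
      rw [hz, star_neg, star_mul, hstarq, hstarp, neg_mul_neg, hqp]
    have hunitary : z ∈ unitary (CliffordAlgebra Q) :=
      ⟨by rw [hstarz]; exact hzz, by rw [hstarz]; exact hzz⟩
    have hQ2 : Q (e 0 + f 0) = 2 := by
      rw [QuadraticMap.map_add (⇑Q) (e 0) (f 0), hQe 0, hQf 0, hpef 0 0]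
      norm_num
    have hQ2' : Q (e 1 + f 1) = 2 := by
      rw [QuadraticMap.map_add (⇑Q) (e 1) (f 1), hQe 1, hQf 1, hpef 1 1]
      norm_num
    have hQ1 : Q ((Complex.I/2) • (f 0 - e 0)) = 1/2 := by
      rw [QuadraticMap.map_smul, sub_eq_add_neg, QuadraticMap.map_add (⇑Q) (f 0) (-(e 0)), QuadraticMap.map_neg,
        hQe 0, hQf 0, QuadraticMap.polar_neg_right, QuadraticMap.polar_comm, hpef 0 0]
      simp only [smul_eq_mul]
      norm_num
      rw [div_mul_div_comm, Complex.I_mul_I]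
      norm_num
    have hQ1' : Q ((Complex.I/2) • (f 1 - e 1)) = 1/2 := by
      rw [QuadraticMap.map_smul, sub_eq_add_neg, QuadraticMap.map_add (⇑Q) (f 1) (-(e 1)), QuadraticMap.map_neg,
        hQe 1, hQf 1, QuadraticMap.polar_neg_right, QuadraticMap.polar_comm, hpef 1 1]
      simp only [smul_eq_mul]
      norm_num
      rw [div_mul_div_comm, Complex.I_mul_I]
      norm_num
    have hz1 : Complex.I • p = ι Q ((Complex.I/2) • (f 0 - e 0)) * ι Q (e 0 + f 0) := by
      rw [map_smul, map_sub, map_add, ← ha_def, ← hb_def, smul_mul_assoc]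
      have key : (b - a) * (a + b) = (2:ℂ) • p := by
        rw [two_smul, hp_def]
        calc (b - a) * (a + b) = b * a + b * b - a * a - a * b := by noncomm_ring
        _ = (2 - a * b) + 0 - 0 - a * b := by rw [haa, hbb, aux_hba hab]
        _ = (1 - a * b) + (1 - a * b) := by
          rw [show (2:CliffordAlgebra Q) = 1 + 1 from one_add_one_eq_two.symm]; noncomm_ring
      rw [key, smul_smul]
      norm_num
    have hz3 : Complex.I • q = ι Q ((Complex.I/2) • (f 1 - e 1)) * ι Q (e 1 + f 1) := by
      rw [map_smul, map_sub, map_add, ← hc_def, ← hd_def, smul_mul_assoc]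
      have key : (d - c) * (c + d) = (2:ℂ) • q := by
        rw [two_smul, hq_def]
        calc (d - c) * (c + d) = d * c + d * d - c * c - c * d := by noncomm_ring
        _ = (2 - c * d) + 0 - 0 - c * d := by rw [hcc, hdd, aux_hba hcd]
        _ = (1 - c * d) + (1 - c * d) := by
          rw [show (2:CliffordAlgebra Q) = 1 + 1 from one_add_one_eq_two.symm]; noncomm_ring
      rw [key, smul_smul]
      norm_num
    have hlip : z ∈ (lipschitzGroup Q).toSubmonoid.map (Units.coeHom (CliffordAlgebra Q)) := by
      rw [hz_def, hz1, hz3]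
      exact mul_mem
        (mul_mem (ι_mem_lipschitz_coe Q _ (by rw [hQ1]; norm_num))
          (ι_mem_lipschitz_coe Q _ (by rw [hQ2]; norm_num)))
        (mul_mem (ι_mem_lipschitz_coe Q _ (by rw [hQ1']; norm_num))
          (ι_mem_lipschitz_coe Q _ (by rw [hQ2']; norm_num)))
    exact ⟨⟨hlip, hunitary⟩, heven⟩
  · -- centralizes x
    rw [map_add]
    have hzcd : z * (c + d) = -((c + d) * z) := by
      rw [mul_add, add_mul, hzc, hzd, neg_add]
    exact aux_comm hzcd hzb
  · -- negates generators
    intro v hv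
    simp only [Set.mem_insert_iff, Set.mem_singleton_iff] at hv
    rcases hv with rfl | rfl | rfl | rfl
    · exact hza
    · exact hzb
    · exact hzc
    · exact hzd
  · -- commutes with orthogonal vectors
    intro w hw
    have hwa : ι Q w * a = -(a * ι Q w) := anti _ _ (hw (e 0) (by simp))
    have hwb : ι Q w * b = -(b * ι Q w) := anti _ _ (hw (f 0) (by simp))
    have hwc : ι Q w * c = -(c * ι Q w) := anti _ _ (hw (e 1) (by simp))
    have hwd : ι Q w * d = -(d * ι Q w) := anti _ _ (hw (f 1) (by simp))
    have hgp : ι Q w * p = p * ι Q w := aux_comm_one_sub (aux_comm hwa hwb)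
    have hgq : ι Q w * q = q * ι Q w := aux_comm_one_sub (aux_comm hwc hwd)
    have : ι Q w * (p * q) = (p * q) * ι Q w := aux_comm_mul hgp hgq
    rw [hz, neg_mul, mul_neg, this]
end

section
/- Let k ≥ 1, let (e_1, …, e_k; f_1, …, f_k) be a hyperbolic family in the complex quadratic space (V, Q), and let u ∈ V satisfy Q(u) = 1 and polar(Q)(u, e_j) = polar(Q)(u, f_j) = 0 for all j. Set N = (1/2)·( ∑_{i=1}^{k−1} ι(e_{i+1})ι(f_i) + ι(u)ι(f_k) ) ∈ C(V,Q) (the sum being empty when k = 1), and let ad(N)(y) = N·y − y·N. Then: ad(N)(ι(e_i)) = ι(e_{i+1}) for 1 ≤ i ≤ k−1; ad(N)(ι(e_k)) = ι(u); ad(N)(ι(u)) = −ι(f_k); ad(N)(ι(f_j)) = −ι(f_{j−1}) for 2 ≤ j ≤ k; and ad(N)(ι(f_1)) = 0. Hence ad(N) preserves the image under ι of the span of {e_1, …, e_k, f_1, …, f_k, u} and acts on it by the single nilpotent Jordan chain e_1 → e_2 → ⋯ → e_k → u → −f_k → f_{k−1} → −f_{k−2} → ⋯ of length 2k+1. -/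
open CliffordAlgebra

private lemma aux_pair_comm {V : Type*} [AddCommGroup V] [Module ℂ V]
    (Q : QuadraticForm ℂ V) (a b x : V) :
    (ι Q a * ι Q b) * ι Q x - ι Q x * (ι Q a * ι Q b)
      = QuadraticMap.polar (⇑Q) b x • ι Q a - QuadraticMap.polar (⇑Q) a x • ι Q b := by
  have h1 : ι Q x * ι Q a
      = QuadraticMap.polar (⇑Q) a x • (1 : CliffordAlgebra Q) - ι Q a * ι Q x := by
    rw [ι_mul_ι_comm, QuadraticMap.polar_comm, Algebra.algebraMap_eq_smul_one]
  have h2 : ι Q x * ι Q b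
      = QuadraticMap.polar (⇑Q) b x • (1 : CliffordAlgebra Q) - ι Q b * ι Q x := by
    rw [ι_mul_ι_comm, QuadraticMap.polar_comm, Algebra.algebraMap_eq_smul_one]
  calc (ι Q a * ι Q b) * ι Q x - ι Q x * (ι Q a * ι Q b)
      = ι Q a * (ι Q b * ι Q x) - (ι Q x * ι Q a) * ι Q b := by rw [mul_assoc, mul_assoc]
    _ = ι Q a * (ι Q b * ι Q x)
        - (QuadraticMap.polar (⇑Q) a x • (1 : CliffordAlgebra Q) - ι Q a * ι Q x) * ι Q b := by
        rw [h1]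
    _ = _ := by
        rw [sub_mul, mul_assoc, h2, mul_sub, smul_mul_assoc, mul_smul_comm, one_mul, mul_one]
        abel

/-- The element `N = ½(∑ ι(e_{i+1})ι(f_i) + ι(u)ι(f_k))` acts by `ad` on the span of the block
as the single Jordan chain `e₁ → ⋯ → e_k → u → −f_k → f_{k−1} → −f_{k−2} → ⋯` of length
`2k+1`. -/
theorem jordan_chain_odd_block {V : Type*} [AddCommGroup V] [Module ℂ V]
    (Q : QuadraticForm ℂ V) {k : ℕ} (hk : 1 ≤ k) (e f : Fin k → V) (u : V)
    (hef : IsHyperbolicFamily Q e f) (hu : Q u = 1)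
    (hue : ∀ j, QuadraticMap.polar (⇑Q) u (e j) = 0)
    (huf : ∀ j, QuadraticMap.polar (⇑Q) u (f j) = 0)
    (N : CliffordAlgebra Q)
    (hN : N = (1 / 2 : ℂ) •
      ((∑ i : Fin k, if h : (i : ℕ) + 1 < k then ι Q (e ⟨(i : ℕ) + 1, h⟩) * ι Q (f i) else 0) +
        ι Q u * ι Q (f ⟨k - 1, by omega⟩))) :
    (∀ i : Fin k, ∀ h : (i : ℕ) + 1 < k,
      N * ι Q (e i) - ι Q (e i) * N = ι Q (e ⟨(i : ℕ) + 1, h⟩)) ∧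
    (N * ι Q (e ⟨k - 1, by omega⟩) - ι Q (e ⟨k - 1, by omega⟩) * N = ι Q u) ∧
    (N * ι Q u - ι Q u * N = -ι Q (f ⟨k - 1, by omega⟩)) ∧
    (∀ j : Fin k, ∀ _ : 1 ≤ (j : ℕ),
      N * ι Q (f j) - ι Q (f j) * N = -ι Q (f ⟨(j : ℕ) - 1, by omega⟩)) ∧
    (N * ι Q (f ⟨0, by omega⟩) - ι Q (f ⟨0, by omega⟩) * N = 0) := by
  obtain ⟨he, hf, hefp, hee, hff⟩ := hef
  have hkk : k - 1 < k := by omega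
  have pfe : ∀ i j, QuadraticMap.polar (⇑Q) (f i) (e j) = if j = i then 2 else 0 := by
    intro i j; rw [QuadraticMap.polar_comm]; exact hefp j i
  have pfu : ∀ i, QuadraticMap.polar (⇑Q) (f i) u = 0 := by
    intro i; rw [QuadraticMap.polar_comm]; exact huf i
  have peu : ∀ i, QuadraticMap.polar (⇑Q) (e i) u = 0 := by
    intro i; rw [QuadraticMap.polar_comm]; exact hue i
  have puu : QuadraticMap.polar (⇑Q) u u = 2 := by
    rw [QuadraticMap.polar_self]; rw [hu]; norm_num
  have key : ∀ x : V, N * ι Q x - ι Q x * N = (1 / 2 : ℂ) •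
      ((∑ i : Fin k, if h : (i : ℕ) + 1 < k then
          QuadraticMap.polar (⇑Q) (f i) x • ι Q (e ⟨(i : ℕ) + 1, h⟩)
          - QuadraticMap.polar (⇑Q) (e ⟨(i : ℕ) + 1, h⟩) x • ι Q (f i) else 0) +
        (QuadraticMap.polar (⇑Q) (f ⟨k - 1, hkk⟩) x • ι Q u
          - QuadraticMap.polar (⇑Q) u x • ι Q (f ⟨k - 1, hkk⟩))) := by
    intro x
    subst hN
    set S := ∑ i : Fin k, if h : (i : ℕ) + 1 < k then ι Q (e ⟨(i : ℕ) + 1, h⟩) * ι Q (f i) else 0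
      with hS
    set T := ι Q u * ι Q (f ⟨k - 1, hkk⟩) with hT
    have hSc : S * ι Q x - ι Q x * S = ∑ i : Fin k, if h : (i : ℕ) + 1 < k then
        QuadraticMap.polar (⇑Q) (f i) x • ι Q (e ⟨(i : ℕ) + 1, h⟩)
          - QuadraticMap.polar (⇑Q) (e ⟨(i : ℕ) + 1, h⟩) x • ι Q (f i) else 0 := by
      rw [hS, Finset.sum_mul, Finset.mul_sum, ← Finset.sum_sub_distrib]
      refine Finset.sum_congr rfl fun i _ => ?_
      by_cases h : (i : ℕ) + 1 < k
      · rw [dif_pos h, dif_pos h, aux_pair_comm]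
      · rw [dif_neg h, dif_neg h, zero_mul, mul_zero, sub_zero]
    have hTc := aux_pair_comm Q u (f ⟨k - 1, hkk⟩) x
    rw [smul_mul_assoc, mul_smul_comm, ← smul_sub]
    rw [add_mul, mul_add, show S * ι Q x + T * ι Q x - (ι Q x * S + ι Q x * T)
        = (S * ι Q x - ι Q x * S) + (T * ι Q x - ι Q x * T) by abel, hSc, hTc]
  have two_half : ∀ y : CliffordAlgebra Q, (1 / 2 : ℂ) • ((2 : ℂ) • y) = y := by
    intro y; rw [smul_smul]; norm_num
  refine ⟨?_, ?_, ?_, ?_, ?_⟩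
  · -- ad N (e i) = e (i+1)
    intro i h
    have hne : i ≠ ⟨k - 1, hkk⟩ := by
      intro hcon
      have : (i : ℕ) = k - 1 := congrArg Fin.val hcon
      omega
    rw [key, Finset.sum_eq_single_of_mem i (Finset.mem_univ i)
      (fun b _ hb => by
        by_cases hb1 : (b : ℕ) + 1 < k
        · rw [dif_pos hb1, pfe, if_neg (Ne.symm hb), hee, zero_smul, zero_smul, sub_zero]
        · rw [dif_neg hb1])]
    rw [dif_pos h, pfe, if_pos rfl, hee, pfe, if_neg hne, hue, zero_smul, zero_smul, zero_smul,
      sub_zero, sub_zero, add_zero, two_half]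
  · -- ad N (e (k-1)) = u
    rw [key, Finset.sum_eq_zero (fun b _ => by
        by_cases hb1 : (b : ℕ) + 1 < k
        · rw [dif_pos hb1, pfe, hee, if_neg (by
            intro hcon
            have : k - 1 = (b : ℕ) := congrArg Fin.val hcon
            omega), zero_smul, zero_smul, sub_zero]
        · rw [dif_neg hb1]),
      pfe, if_pos rfl, hue, zero_smul, sub_zero, zero_add, two_half]
  · -- ad N u = -f (k-1)
    rw [key, Finset.sum_eq_zero (fun b _ => by
        by_cases hb1 : (b : ℕ) + 1 < k
        · rw [dif_pos hb1, pfu, peu, zero_smul, zero_smul, sub_zero]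
        · rw [dif_neg hb1]),
      pfu, puu, zero_smul, zero_add, zero_sub, smul_neg, two_half]
  · -- ad N (f j) = -f (j-1)
    intro j hj
    have hjk : (j : ℕ) - 1 + 1 < k := by omega
    rw [key, Finset.sum_eq_single_of_mem ⟨(j : ℕ) - 1, by omega⟩ (Finset.mem_univ _)
      (fun b _ hb => by
        by_cases hb1 : (b : ℕ) + 1 < k
        · rw [dif_pos hb1, hff, hefp, if_neg (by
            intro hcon
            apply hb
            have h2 : (b : ℕ) + 1 = (j : ℕ) := congrArg Fin.val hcon
            exact Fin.ext (show (b : ℕ) = (j : ℕ) - 1 by omega)),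
            zero_smul, zero_smul, sub_zero]
        · rw [dif_neg hb1])]
    have hidx : (⟨(j : ℕ) - 1 + 1, hjk⟩ : Fin k) = j :=
      Fin.ext (show (j : ℕ) - 1 + 1 = (j : ℕ) by omega)
    rw [dif_pos hjk, hff, hidx, hefp, if_pos rfl, hff, huf, zero_smul, zero_smul, zero_smul,
      zero_sub, sub_zero, add_zero, smul_neg, two_half]
  · -- ad N (f 0) = 0
    rw [key, Finset.sum_eq_zero (fun b _ => by
        by_cases hb1 : (b : ℕ) + 1 < k
        · rw [dif_pos hb1, hff, hefp, if_neg (by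
            intro hcon
            have h2 : (b : ℕ) + 1 = 0 := congrArg Fin.val hcon
            omega), zero_smul, zero_smul, sub_zero]
        · rw [dif_neg hb1]),
      hff, huf, zero_smul, zero_smul, sub_zero, add_zero, smul_zero]
end

section
/- Let (e_1, …, e_n; f_1, …, f_n) be a hyperbolic family in the complex quadratic space (V, Q). In C(V,Q) set H_m = (1 − ι(e_m)ι(f_m))/2 for 1 ≤ m ≤ n, and for i ≠ j set X^+_{ij} = ι(f_i)ι(f_j)/2, X^−_{ij} = ι(e_i)ι(e_j)/2, and X^0_{ij} = ι(e_i)ι(f_j)/2. Then, with ⁅a, b⁆ = ab − ba: (a) ⁅H_m, H_l⁆ = 0 for all m, l; (b) ⁅H_m, X^+_{ij}⁆ = (δ_{mi} + δ_{mj})·X^+_{ij}; (c) ⁅H_m, X^−_{ij}⁆ = −(δ_{mi} + δ_{mj})·X^−_{ij}; (d) ⁅H_m, X^0_{ij}⁆ = (−δ_{mi} + δ_{mj})·X^0_{ij}; and (e) reverse(H_m) = −H_m, reverse(X^+_{ij}) = −X^+_{ij}, reverse(X^−_{ij}) = −X^−_{ij}. (Thus the H_m span a Cartan subalgebra of the copy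 of so(2n) inside the Clifford algebra, with the displayed elements as root vectors for the roots ε_i + ε_j, −ε_i − ε_j, and −ε_i + ε_j in Weyl normal form.) -/
open CliffordAlgebra

section Aux
variable {V : Type*} [AddCommGroup V] [Module ℂ V] (Q : QuadraticForm ℂ V)

lemma my_swap (x y : V) : ι Q x * ι Q y = algebraMap ℂ _ (QuadraticMap.polar Q x y) - ι Q y * ι Q x :=
  eq_sub_of_add_eq (ι_mul_ι_add_swap x y)

lemma comm4 (x y z w : V) (p q r s : ℂ)
    (hyz : QuadraticMap.polar (⇑Q) y z = p) (hxz : QuadraticMap.polar (⇑Q) x z = q)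
    (hyw : QuadraticMap.polar (⇑Q) y w = r) (hxw : QuadraticMap.polar (⇑Q) x w = s) :
    (ι Q x * ι Q y) * (ι Q z * ι Q w) - (ι Q z * ι Q w) * (ι Q x * ι Q y)
      = p • (ι Q x * ι Q w) - q • (ι Q y * ι Q w) + r • (ι Q z * ι Q x) - s • (ι Q z * ι Q y) := by
  have h1 : ι Q y * ι Q z = algebraMap ℂ _ p - ι Q z * ι Q y := by rw [← hyz]; exact my_swap Q y z
  have h2 : ι Q x * ι Q z = algebraMap ℂ _ q - ι Q z * ι Q x := by rw [← hxz]; exact my_swap Q x z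
  have h3 : ι Q y * ι Q w = algebraMap ℂ _ r - ι Q w * ι Q y := by rw [← hyw]; exact my_swap Q y w
  have h4 : ι Q x * ι Q w = algebraMap ℂ _ s - ι Q w * ι Q x := by rw [← hxw]; exact my_swap Q x w
  have key : (ι Q x * ι Q y) * (ι Q z * ι Q w)
      = algebraMap ℂ _ p * (ι Q x * ι Q w) - algebraMap ℂ _ q * (ι Q y * ι Q w)
        + algebraMap ℂ _ r * (ι Q z * ι Q x) - algebraMap ℂ _ s * (ι Q z * ι Q y)
        + (ι Q z * ι Q w) * (ι Q x * ι Q y) := by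
    calc (ι Q x * ι Q y) * (ι Q z * ι Q w) = ι Q x * (ι Q y * ι Q z) * ι Q w := by noncomm_ring
    _ = ι Q x * (algebraMap ℂ _ p - ι Q z * ι Q y) * ι Q w := by rw [h1]
    _ = algebraMap ℂ _ p * (ι Q x * ι Q w) - (ι Q x * ι Q z) * (ι Q y * ι Q w) := by
        simp only [mul_sub, sub_mul, mul_assoc, Algebra.commutes]; try noncomm_ring
    _ = algebraMap ℂ _ p * (ι Q x * ι Q w) - (algebraMap ℂ _ q - ι Q z * ι Q x) * (ι Q y * ι Q w) := by rw [h2]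
    _ = algebraMap ℂ _ p * (ι Q x * ι Q w) - algebraMap ℂ _ q * (ι Q y * ι Q w)
        + ι Q z * (ι Q x * (ι Q y * ι Q w)) := by noncomm_ring
    _ = algebraMap ℂ _ p * (ι Q x * ι Q w) - algebraMap ℂ _ q * (ι Q y * ι Q w)
        + ι Q z * (ι Q x * (algebraMap ℂ _ r - ι Q w * ι Q y)) := by rw [← h3]
    _ = algebraMap ℂ _ p * (ι Q x * ι Q w) - algebraMap ℂ _ q * (ι Q y * ι Q w)
        + algebraMap ℂ _ r * (ι Q z * ι Q x) - ι Q z * ((ι Q x * ι Q w) * ι Q y) := by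
        simp only [mul_sub, sub_mul, mul_assoc, Algebra.commutes]; try noncomm_ring
    _ = algebraMap ℂ _ p * (ι Q x * ι Q w) - algebraMap ℂ _ q * (ι Q y * ι Q w)
        + algebraMap ℂ _ r * (ι Q z * ι Q x) - ι Q z * ((algebraMap ℂ _ s - ι Q w * ι Q x) * ι Q y) := by rw [h4]
    _ = _ := by
        simp only [mul_sub, sub_mul, mul_assoc, Algebra.commutes]; try noncomm_ring
  rw [key]
  simp only [Algebra.smul_def, mul_sub, sub_mul, mul_assoc, Algebra.commutes]
  noncomm_ring

lemma half_comm (A X : CliffordAlgebra Q) :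
    ((1/2:ℂ) • ((1:CliffordAlgebra Q) - A)) * ((1/2:ℂ) • X)
      - ((1/2:ℂ) • X) * ((1/2:ℂ) • ((1:CliffordAlgebra Q) - A))
      = (-(1/4) : ℂ) • (A * X - X * A) := by
  simp only [smul_mul_assoc, mul_smul_comm, smul_smul, sub_mul, mul_sub, one_mul, mul_one,
    smul_sub, neg_smul]
  norm_num
  module

end Aux

/-- Cartan subalgebra elements `H_m = (1 − ι(e_m)ι(f_m))/2` and root vectors
`X⁺_{ij} = ι(f_i)ι(f_j)/2`, `X⁻_{ij} = ι(e_i)ι(e_j)/2`, `X⁰_{ij} = ι(e_i)ι(f_j)/2` of the copy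
of `so(2n)` inside the Clifford algebra: commutation relations and behaviour under reversal. -/
theorem cartan_root_vectors_clifford {V : Type*} [AddCommGroup V] [Module ℂ V]
    (Q : QuadraticForm ℂ V) {n : ℕ} (e f : Fin n → V)
    (hef : IsHyperbolicFamily Q e f)
    (H : Fin n → CliffordAlgebra Q)
    (hH : ∀ m, H m = (1 / 2 : ℂ) • ((1 : CliffordAlgebra Q) - ι Q (e m) * ι Q (f m)))
    (Xp Xm X0 : Fin n → Fin n → CliffordAlgebra Q)
    (hXp : ∀ i j, Xp i j = (1 / 2 : ℂ) • (ι Q (f i) * ι Q (f j)))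
    (hXm : ∀ i j, Xm i j = (1 / 2 : ℂ) • (ι Q (e i) * ι Q (e j)))
    (hX0 : ∀ i j, X0 i j = (1 / 2 : ℂ) • (ι Q (e i) * ι Q (f j))) :
    (∀ m l, H m * H l - H l * H m = 0) ∧
    (∀ m i j, i ≠ j →
      H m * Xp i j - Xp i j * H m =
        (((if m = i then (1 : ℂ) else 0) + (if m = j then (1 : ℂ) else 0))) • Xp i j) ∧
    (∀ m i j, i ≠ j →
      H m * Xm i j - Xm i j * H m =
        (-((if m = i then (1 : ℂ) else 0) + (if m = j then (1 : ℂ) else 0))) • Xm i j) ∧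
    (∀ m i j, i ≠ j →
      H m * X0 i j - X0 i j * H m =
        ((-(if m = i then (1 : ℂ) else 0) + (if m = j then (1 : ℂ) else 0))) • X0 i j) ∧
    (∀ m, reverse (Q := Q) (H m) = -H m) ∧
    (∀ i j, i ≠ j → reverse (Q := Q) (Xp i j) = -Xp i j) ∧
    (∀ i j, i ≠ j → reverse (Q := Q) (Xm i j) = -Xm i j) := by
  obtain ⟨hQe, hQf, hEF, hEE, hFF⟩ := hef
  have hFE : ∀ i j, QuadraticMap.polar (⇑Q) (f i) (e j) = if j = i then 2 else 0 := fun i j => by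
    rw [QuadraticMap.polar_comm]; exact hEF j i
  refine ⟨?_, ?_, ?_, ?_, ?_, ?_, ?_⟩
  · -- [H, H] = 0
    intro m l
    by_cases hml : m = l
    · subst hml; simp
    · rw [hH, hH, half_comm]
      have hc := comm4 Q (e m) (f m) (e l) (f l) 0 0 0 0
        (by rw [hFE]; simp [Ne.symm hml]) (hEE m l) (hFF m l) (by rw [hEF]; simp [hml])
      have h2 : ι Q (e m) * ι Q (f m) * ((1:CliffordAlgebra Q) - ι Q (e l) * ι Q (f l))
          - ((1:CliffordAlgebra Q) - ι Q (e l) * ι Q (f l)) * (ι Q (e m) * ι Q (f m))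
          = -((ι Q (e m) * ι Q (f m)) * (ι Q (e l) * ι Q (f l))
              - (ι Q (e l) * ι Q (f l)) * (ι Q (e m) * ι Q (f m))) := by noncomm_ring
      rw [h2, hc]
      simp
  · -- [H, Xp]
    intro m i j hij
    rw [hH, hXp, half_comm]
    have hc := comm4 Q (e m) (f m) (f i) (f j)
      0 (if m = i then 2 else 0) 0 (if m = j then 2 else 0)
      (hFF m i) (hEF m i) (hFF m j) (hEF m j)
    rw [hc]
    by_cases hmi : m = i
    · subst hmi
      simp only [if_pos rfl, if_neg hij, if_neg, hij]
      simp [smul_smul, smul_sub, smul_add]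
      norm_num
    · by_cases hmj : m = j
      · subst hmj
        simp only [if_neg hmi, if_pos rfl, if_neg (Ne.symm hmi)]
        simp [smul_smul, smul_sub, smul_add]
        norm_num
      · simp [if_neg hmi, if_neg hmj]
  · -- [H, Xm]
    intro m i j hij
    rw [hH, hXm, half_comm]
    have hc := comm4 Q (e m) (f m) (e i) (e j)
      (if m = i then 2 else 0) 0 (if m = j then 2 else 0) 0
      (by rw [hFE]; simp [eq_comm]) (hEE m i) (by rw [hFE]; simp [eq_comm]) (hEE m j)
    rw [hc]
    by_cases hmi : m = i
    · subst hmi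
      simp only [if_pos rfl, if_neg hij]
      simp [smul_smul, smul_sub, smul_add]
      norm_num
    · by_cases hmj : m = j
      · subst hmj
        simp only [if_neg hmi, if_pos rfl]
        simp [smul_smul, smul_sub, smul_add]
        norm_num
      · simp [if_neg hmi, if_neg hmj]
  · -- [H, X0]
    intro m i j hij
    rw [hH, hX0, half_comm]
    have hc := comm4 Q (e m) (f m) (e i) (f j)
      (if m = i then 2 else 0) 0 0 (if m = j then 2 else 0)
      (by rw [hFE]; simp [eq_comm]) (hEE m i) (hFF m j) (hEF m j)
    rw [hc]
    by_cases hmi : m = i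
    · subst hmi
      simp only [if_pos rfl, if_neg hij]
      simp [smul_smul, smul_sub, smul_add]
      norm_num
    · by_cases hmj : m = j
      · subst hmj
        simp only [if_neg hmi, if_pos rfl]
        simp [smul_smul, smul_sub, smul_add]
        norm_num
      · simp [if_neg hmi, if_neg hmj]
  · -- reverse H
    intro m
    rw [hH]
    rw [map_smul]
    rw [map_sub, reverse.map_one, reverse.map_mul, reverse_ι, reverse_ι]
    have h := my_swap Q (f m) (e m)
    rw [h, hFE]
    simp only [if_true, eq_self_iff_true, Algebra.algebraMap_eq_smul_one]
    module
  · -- reverse Xp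
    intro i j hij
    rw [hXp]
    rw [map_smul, reverse.map_mul, reverse_ι, reverse_ι]
    rw [my_swap Q (f j) (f i), hFF]
    simp
  · -- reverse Xm
    intro i j hij
    rw [hXm]
    rw [map_smul, reverse.map_mul, reverse_ι, reverse_ι]
    rw [my_swap Q (e j) (e i)]
    rw [QuadraticMap.polar_comm, hEE]
    simp
end
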